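/- arXiv:0812.1542 — 5 statements merged into one kernel-verified Lean document; each statement's English description precedes it below -/
import Mathlib

section
/- For positive integers k ≥ 3 and m < ⌊k/2⌋, the chromatic number of the m-th power of the cycle C_k equals ⌈k / ⌊k/(m+1)⌋⌉. -/
/-!
On `C_n` the distance between `u` and `v` is the cyclic distance `min (v - u) (u - v)` in
`Fin n`, so `C_n^m` joins two vertices iff they are at cyclic distance at most `m`.

Lower bound: the arcs `x, x + 1, …, x + m` starting at the points of an independent set are
pairwise disjoint, so an independent set has at most `q = ⌊n / (m + 1)⌋` points, and every
colour class of a colouring is independent.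

Upper bound: write `n = q d + s` with `0 ≤ s < q`, so `d ≥ m + 1`. Cut the cycle into `s` arcs
of length `d + 1` followed by `q - s` arcs of length `d`, and colour each vertex by its offset
in its arc. Two vertices of the same colour lie in different arcs, at cyclic distance at least
`d`, and `⌈n / q⌉` colours suffice.
-/

open SimpleGraph

/-- The `m`-th power of a graph `G`: two distinct vertices are adjacent iff
their distance in `G` is at most `m` (and they are connected). -/
def SimpleGraph.power {V : Type*} (G : SimpleGraph V) (m : ℕ) : SimpleGraph V where
  Adj x y := x ≠ y ∧ G.Reachable x y ∧ G.dist x y ≤ m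
  symm := ⟨fun x y => by
    rintro ⟨h1, h2, h3⟩
    exact ⟨h1.symm, h2.symm, by rwa [SimpleGraph.dist_comm]⟩⟩
  loopless := ⟨fun x => by simp⟩

/-- The `n`-subdivision of a graph `G`: every edge is replaced by a path of
length `n`.  Terminal vertices are `Sum.inl` vertices; each edge `e` carries
`n - 1` internal vertices `Sum.inr (e, i)`, `i : Fin (n-1)`, ordered along a
fixed orientation of `e`. -/
def SimpleGraph.subdivision {V : Type*} (G : SimpleGraph V) (n : ℕ) :
    SimpleGraph (V ⊕ (G.edgeSet × Fin (n - 1))) where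
  Adj x y :=
    match x, y with
    | Sum.inl u, Sum.inl v => n = 1 ∧ G.Adj u v
    | Sum.inl u, Sum.inr (e, i) =>
        (u = (Quot.out e.1).1 ∧ (i : ℕ) = 0) ∨
        (u = (Quot.out e.1).2 ∧ (i : ℕ) = n - 2)
    | Sum.inr (e, i), Sum.inl v =>
        (v = (Quot.out e.1).1 ∧ (i : ℕ) = 0) ∨
        (v = (Quot.out e.1).2 ∧ (i : ℕ) = n - 2)
    | Sum.inr (e, i), Sum.inr (f, j) =>
        e = f ∧ ((i : ℕ) + 1 = (j : ℕ) ∨ (j : ℕ) + 1 = (i : ℕ))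
  symm := ⟨fun x y => by
    rcases x with u | ⟨e, i⟩ <;> rcases y with v | ⟨f, j⟩ <;>
      simp only [] <;> intro h
    · exact ⟨h.1, h.2.symm⟩
    · exact h
    · exact h
    · obtain ⟨rfl, h2⟩ := h; exact ⟨rfl, h2.symm⟩⟩
  loopless := ⟨fun x => by
    rcases x with u | ⟨e, i⟩ <;> simp only []
    · rintro ⟨-, h⟩; exact G.loopless.irrefl u h
    · rintro ⟨-, h | h⟩ <;> omega⟩

open Finset

lemma Nat.add_le_of_modEq {a b e : ℕ} (h : a ≡ b [MOD e]) (hab : a < b) : a + e ≤ b := by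
  by_contra! hlt
  exact (h.symm.le_of_lt_add hlt).not_gt hab

lemma Nat.add_le_add_mod_of_dvd {x T e : ℕ} (hT : e ∣ T) (hx : x < T) : x + e ≤ T + x % e := by
  have h : T + x % e ≡ x [MOD e] := by
    simpa using (Nat.modEq_zero_iff_dvd.2 hT).add (Nat.mod_modEq x e)
  exact Nat.add_le_of_modEq h.symm (by omega)

/-- Colours `i` by its offset in its block, when `ℕ` is cut into `s` blocks of length `d + 1`
followed by blocks of length `d`. -/
def blockColor (d s i : ℕ) : ℕ := if i < s * (d + 1) then i % (d + 1) else (i - s * (d + 1)) % d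

lemma blockColor_gap {d s t a b : ℕ} (ht : 0 < t) (hab : a < b)
    (hb : b < s * (d + 1) + t * d) (h : blockColor d s a = blockColor d s b) :
    a + d ≤ b ∧ b + d ≤ s * (d + 1) + t * d + a := by
  have hdT : d ≤ t * d := Nat.le_mul_of_pos_left d ht
  have hS : d + 1 ∣ s * (d + 1) := dvd_mul_left _ _
  have hT : d ∣ t * d := dvd_mul_left _ _
  unfold blockColor at h
  set S := s * (d + 1)
  set T := t * d
  split_ifs at h with ha hb'
  · have := Nat.add_le_of_modEq h hab
    omega
  · have h₁ := Nat.add_le_add_mod_of_dvd hS ha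
    have h₂ := Nat.add_le_add_mod_of_dvd hT (show b - S < T by omega)
    have := Nat.mod_le a (d + 1)
    have := Nat.mod_le (b - S) d
    omega
  · omega
  · have h₁ := Nat.add_le_of_modEq h (show a - S < b - S by omega)
    have h₂ := Nat.add_le_of_modEq (b := a - S + T)
      (h.symm.trans (Nat.add_mul_mod_self_right _ _ _).symm) (by omega)
    omega

lemma blockColor_lt_ceilDiv {d s q : ℕ} (hd : 0 < d) (hs : s < q) (i : ℕ) :
    blockColor d s i < (q * d + s) ⌈/⌉ q := by
  refine lt_of_not_ge fun h => ?_
  rw [ceilDiv_le_iff_le_mul (by omega)] at h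
  unfold blockColor at h
  split_ifs at h with hi
  · have hs0 : s ≠ 0 := by rintro rfl; simp at hi
    have hmod : i % (d + 1) ≤ d := Nat.le_of_lt_succ (Nat.mod_lt i (by omega))
    have := Nat.mul_le_mul_left q hmod
    omega
  · have := Nat.mul_le_mul_left q (Nat.mod_lt (i - s * (d + 1)) hd)
    rw [Nat.mul_succ] at this
    omega

namespace Fin

variable {n : ℕ}

lemma val_sub_eq_or (a b : Fin n) :
    (b.val ≤ a.val ∧ (a - b).val = a.val - b.val) ∨
      (a.val < b.val ∧ (a - b).val = n + a.val - b.val) := by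
  rcases le_or_gt b a with h | h
  · exact .inl ⟨h, coe_sub_iff_le.2 h⟩
  · exact .inr ⟨h, coe_sub_iff_lt.2 h⟩

def cyclicDist (u v : Fin n) : ℕ := min (v - u).val (u - v).val

lemma cyclicDist_comm (u v : Fin n) : u.cyclicDist v = v.cyclicDist u := min_comm _ _

lemma cyclicDist_le_of_add_eq_add {m : ℕ} {x x' z z' : Fin (n + 1)} (h : z + x = z' + x')
    (hz : z.val ≤ m) (hz' : z'.val ≤ m) : x.cyclicDist x' ≤ m := by
  have h₁ : x' - x = z - z' := sub_eq_sub_iff_add_eq_add.2 (by rw [h, add_comm x'])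
  have h₂ : x - x' = z' - z := sub_eq_sub_iff_add_eq_add.2 (by rw [← h, add_comm x])
  unfold cyclicDist
  rw [h₁, h₂]
  rcases val_sub_eq_or z z' with ⟨_, h⟩ | ⟨_, h⟩ <;>
    rcases val_sub_eq_or z' z with ⟨_, h'⟩ | ⟨_, h'⟩ <;> omega

end Fin

namespace SimpleGraph

variable {n m : ℕ}

lemma cyclicDist_le_of_cycleGraph_adj {a b : Fin n} (h : (cycleGraph n).Adj a b) (v : Fin n) :
    a.cyclicDist v ≤ b.cyclicDist v + 1 := by
  rw [cycleGraph_adj'] at h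
  unfold Fin.cyclicDist
  have := Fin.val_sub_eq_or a b
  have := Fin.val_sub_eq_or b a
  have := Fin.val_sub_eq_or a v
  have := Fin.val_sub_eq_or v a
  have := Fin.val_sub_eq_or b v
  have := Fin.val_sub_eq_or v b
  omega

lemma cyclicDist_le_cycleGraph_dist (u v : Fin n) : u.cyclicDist v ≤ (cycleGraph n).dist u v := by
  obtain ⟨n, rfl⟩ := Nat.exists_eq_add_one_of_ne_zero u.pos.ne'
  obtain ⟨p, hp⟩ := (cycleGraph_preconnected u v).exists_walk_length_eq_dist
  rw [← hp]
  clear hp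
  induction p with
  | nil => simp [Fin.cyclicDist]
  | cons h p ih =>
    rw [Walk.length_cons]
    exact (cyclicDist_le_of_cycleGraph_adj h _).trans (Nat.add_le_add_right ih 1)

lemma cycleGraph_dist_add_one_le (x : Fin (n + 1)) : (cycleGraph (n + 1)).dist x (x + 1) ≤ 1 := by
  rcases n with _ | n
  · simp
  · exact (dist_eq_one_iff_adj.2 (cycleGraph_adj.2 (.inr (add_sub_cancel_left x 1)))).le

open Fin.NatCast in
lemma cycleGraph_dist_add_natCast_le (x : Fin (n + 1)) (j : ℕ) :
    (cycleGraph (n + 1)).dist x (x + (j : Fin (n + 1))) ≤ j := by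
  induction j with
  | zero => simp
  | succ j ih =>
    set y : Fin (n + 1) := x + (j : Fin (n + 1))
    calc (cycleGraph (n + 1)).dist x (x + ((j + 1 : ℕ) : Fin (n + 1)))
        ≤ (cycleGraph (n + 1)).dist x y + (cycleGraph (n + 1)).dist y (y + 1) := by
          rw [Nat.cast_succ, ← add_assoc]
          exact cycleGraph_connected.dist_triangle
      _ ≤ j + 1 := add_le_add ih (cycleGraph_dist_add_one_le _)

open Fin.NatCast in
lemma cycleGraph_dist_le_val_sub (u v : Fin n) : (cycleGraph n).dist u v ≤ (v - u).val := by
  obtain ⟨n, rfl⟩ := Nat.exists_eq_add_one_of_ne_zero u.pos.ne'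
  simpa using cycleGraph_dist_add_natCast_le u (v - u).val

theorem cycleGraph_dist (u v : Fin n) : (cycleGraph n).dist u v = u.cyclicDist v :=
  le_antisymm
    (le_min (cycleGraph_dist_le_val_sub u v) (dist_comm.trans_le (cycleGraph_dist_le_val_sub v u)))
    (cyclicDist_le_cycleGraph_dist u v)

theorem cycleGraph_power_adj {u v : Fin n} :
    ((cycleGraph n).power m).Adj u v ↔ u ≠ v ∧ u.cyclicDist v ≤ m := by
  change u ≠ v ∧ _ ∧ _ ↔ _
  simp [cycleGraph_dist, cycleGraph_preconnected u v]

lemma Colorable.card_le_indepNum_mul {V : Type*} [Fintype V] {G : SimpleGraph V}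
    (h : G.Colorable n) : Fintype.card V ≤ G.indepNum * n := by
  classical
  obtain ⟨C⟩ := h
  simpa using card_le_mul_card_image_of_maps_to (s := univ) (t := univ) (f := C)
    (fun _ _ => mem_univ _) G.indepNum fun c _ =>
      IsIndepSet.card_le_indepNum (by simpa [Coloring.colorClass] using C.isIndepSet_colorClass c)

theorem card_mul_le_of_isIndepSet_cycleGraph_power (hmn : m < n) {S : Finset (Fin n)}
    (hS : ((cycleGraph n).power m).IsIndepSet S) : #S * (m + 1) ≤ n := by
  obtain ⟨n, rfl⟩ := Nat.exists_eq_add_one_of_ne_zero (Nat.ne_zero_of_lt hmn)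
  classical
  let arc (x : Fin (n + 1)) : Finset (Fin (n + 1)) :=
    (Iic (⟨m, hmn⟩ : Fin (n + 1))).map (addRightEmbedding x)
  have hdisj : (S : Set (Fin (n + 1))).PairwiseDisjoint arc := by
    intro x hx x' hx' hne
    refine Finset.disjoint_left.2 fun y hy hy' => ?_
    simp only [arc, mem_map, mem_Iic, addRightEmbedding_apply] at hy hy'
    obtain ⟨z, hz, rfl⟩ := hy
    obtain ⟨z', hz', h⟩ := hy'
    exact hS hx hx' hne
      (cycleGraph_power_adj.2 ⟨hne, Fin.cyclicDist_le_of_add_eq_add h.symm hz hz'⟩)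
  calc #S * (m + 1) = ∑ x ∈ S, #(arc x) := by simp [arc, mul_comm]
    _ = #(S.biUnion arc) := (card_biUnion hdisj).symm
    _ ≤ n + 1 := (card_le_univ _).trans_eq (Fintype.card_fin _)

theorem indepNum_cycleGraph_power_le (hmn : m < n) :
    ((cycleGraph n).power m).indepNum ≤ n / (m + 1) := by
  obtain ⟨S, hS⟩ := exists_isNIndepSet_indepNum (G := (cycleGraph n).power m)
  rw [← hS.card_eq, Nat.le_div_iff_mul_le m.succ_pos]
  exact card_mul_le_of_isIndepSet_cycleGraph_power hmn hS.isIndepSet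

theorem cycleGraph_power_colorable (hmn : m < n) :
    ((cycleGraph n).power m).Colorable (n ⌈/⌉ (n / (m + 1))) := by
  set q := n / (m + 1)
  have hq : 0 < q := Nat.div_pos (by omega) m.succ_pos
  set d := n / q
  set s := n % q
  have hmd : m + 1 ≤ d := (Nat.le_div_iff_mul_le hq).2 (by
    simpa only [mul_comm] using Nat.div_mul_le_self n (m + 1))
  have hn : q * d + s = n := Nat.div_add_mod n q
  have hsq : s < q := Nat.mod_lt n hq
  have hn' : n = s * (d + 1) + (q - s) * d := by
    zify [hsq.le] at hn ⊢
    linear_combination -hn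
  have hgap (x y : Fin n) (hxy : x.val < y.val) (hc : blockColor d s x = blockColor d s y) :
      m < x.cyclicDist y := by
    obtain ⟨h₁, h₂⟩ := blockColor_gap (t := q - s) (by omega) hxy (hn' ▸ y.isLt) hc
    unfold Fin.cyclicDist
    rcases Fin.val_sub_eq_or y x with ⟨_, h⟩ | ⟨_, h⟩ <;>
      rcases Fin.val_sub_eq_or x y with ⟨_, h'⟩ | ⟨_, h'⟩ <;> omega
  refine (colorable_iff_exists_bdd_nat_coloring _).2
    ⟨Coloring.mk (fun x => blockColor d s x) fun {x y} hadj h => ?_,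
      fun x => hn ▸ blockColor_lt_ceilDiv (by omega) hsq x⟩
  obtain ⟨hne, hle⟩ := cycleGraph_power_adj.1 hadj
  rcases lt_trichotomy x.val y.val with hxy | hxy | hxy
  · exact (hgap x y hxy h).not_ge hle
  · exact hne (Fin.ext hxy)
  · exact (hgap y x hxy h.symm).not_ge (x.cyclicDist_comm y ▸ hle)

theorem chromaticNumber_cycleGraph_power (hmn : m < n) :
    ((cycleGraph n).power m).chromaticNumber = (n ⌈/⌉ (n / (m + 1)) : ℕ) := by
  have hq : 0 < n / (m + 1) := Nat.div_pos (by omega) m.succ_pos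
  refine le_antisymm (cycleGraph_power_colorable hmn).chromaticNumber_le
    (le_chromaticNumber_iff_colorable.2 fun N hN => ?_)
  rw [ceilDiv_le_iff_le_mul hq]
  calc n = Fintype.card (Fin n) := (Fintype.card_fin n).symm
    _ ≤ ((cycleGraph n).power m).indepNum * N := hN.card_le_indepNum_mul
    _ ≤ n / (m + 1) * N := Nat.mul_le_mul_right N (indepNum_cycleGraph_power_le hmn)

end SimpleGraph

theorem cycle_power_chromatic_small_general (k m : ℕ) (hmk : m < k / 2) :
    ((cycleGraph k).power m).chromaticNumber = ((k ⌈/⌉ (k / (m + 1)) : ℕ) : ℕ∞) :=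
  chromaticNumber_cycleGraph_power (by omega)

theorem cycle_power_chromatic_small (k m : ℕ) (hk : 3 ≤ k) (hm : 0 < m)
    (hmk : m < k / 2) :
    ((cycleGraph k).power m).chromaticNumber = ((k ⌈/⌉ (k / (m + 1)) : ℕ) : ℕ∞) :=
  cycle_power_chromatic_small_general k m hmk
end

section
/- For positive integers k and m, the chromatic number of the m-th power of the path P_k on k vertices equals min{m+1, k}. -/
/-!
Vertices `i, j` of `P_k` are at distance `|i - j|`, so in `P_k^m` they are adjacent iff
`0 < |i - j| ≤ m`. Colouring `i` by `i mod (m + 1)` is then proper, and the first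
`min (m + 1) k` vertices form a clique.
-/

open SimpleGraph

namespace SimpleGraph

variable {V : Type*} {G : SimpleGraph V}

theorem Preconnected.power_adj (hG : G.Preconnected) {m : ℕ} {x y : V} :
    (G.power m).Adj x y ↔ x ≠ y ∧ G.dist x y ≤ m := by
  simp only [power, hG x y, true_and]

theorem Walk.natDist_le_length {f : V → ℕ} (hf : ∀ u v, G.Adj u v → Nat.dist (f u) (f v) ≤ 1)
    {u v : V} (w : G.Walk u v) : Nat.dist (f u) (f v) ≤ w.length := by
  induction w with
  | nil => simp
  | cons h p ih =>
    calc _ ≤ _ := Nat.dist.triangle_inequality _ _ _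
      _ ≤ 1 + p.length := add_le_add (hf _ _ h) ih
      _ = _ := by rw [Walk.length_cons, add_comm]

end SimpleGraph

variable {k : ℕ}

theorem pathGraph_dist_le_of_add_eq {i j : Fin k} {d : ℕ} (h : i.val + d = j.val) :
    (pathGraph k).dist i j ≤ d := by
  induction d generalizing j with
  | zero => simp [Fin.ext (by simpa using h)]
  | succ d ih =>
    let j' : Fin k := ⟨i + d, by omega⟩
    have hadj : (pathGraph k).Adj j' j := pathGraph_adj.mpr (.inl (by simp [j']; omega))
    calc (pathGraph k).dist i j ≤ (pathGraph k).dist i j' + (pathGraph k).dist j' j :=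
          (pathGraph_preconnected k i j').dist_triangle_left j
      _ ≤ d + 1 := add_le_add (ih rfl) (dist_le hadj.toWalk)

theorem pathGraph_dist (i j : Fin k) : (pathGraph k).dist i j = Nat.dist i j := by
  refine le_antisymm ?_ ?_
  · rcases le_total i j with h | h
    · exact pathGraph_dist_le_of_add_eq (by rw [Nat.dist_eq_sub_of_le h]; omega)
    · rw [dist_comm, Nat.dist_comm]
      exact pathGraph_dist_le_of_add_eq (by rw [Nat.dist_eq_sub_of_le h]; omega)
  · obtain ⟨w, hw⟩ := (pathGraph_preconnected k i j).exists_walk_length_eq_dist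
    refine hw ▸ w.natDist_le_length fun u v huv ↦ ?_
    rcases pathGraph_adj.mp huv with h | h <;> simp [Nat.dist] <;> omega

theorem pathGraph_power_adj {m : ℕ} {i j : Fin k} :
    ((pathGraph k).power m).Adj i j ↔ i ≠ j ∧ Nat.dist i j ≤ m := by
  rw [(pathGraph_preconnected k).power_adj, pathGraph_dist]

theorem pathGraph_power_colorable (k m : ℕ) : ((pathGraph k).power m).Colorable (m + 1) :=
  ⟨Coloring.mk (fun i ↦ ⟨i % (m + 1), Nat.mod_lt _ m.succ_pos⟩) fun {i j} hij hcol ↦ by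
    obtain ⟨hne, hdist⟩ := pathGraph_power_adj.mp hij
    have hmod : (i : ℕ) ≡ j [MOD m + 1] := Fin.mk.inj hcol
    have hlt : (i : ℕ) < j + (m + 1) ∧ (j : ℕ) < i + (m + 1) := by
      simp only [Nat.dist] at hdist; omega
    exact hne (Fin.ext (le_antisymm (hmod.le_of_lt_add hlt.1) (hmod.symm.le_of_lt_add hlt.2)))⟩

theorem min_le_chromaticNumber_pathGraph_power (k m : ℕ) :
    ((min (m + 1) k : ℕ) : ℕ∞) ≤ ((pathGraph k).power m).chromaticNumber := by
  refine le_chromaticNumber_of_pairwise_adj (by simp) (Fin.castLE (min_le_right (m + 1) k))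
    fun i j hij ↦ pathGraph_power_adj.mpr ⟨(Fin.castLE_injective _).ne hij, ?_⟩
  have := i.isLt; have := j.isLt
  simp only [Fin.val_castLE, Nat.dist]
  omega

theorem path_power_chromatic_general (k m : ℕ) :
    ((pathGraph k).power m).chromaticNumber = ((min (m + 1) k : ℕ) : ℕ∞) := by
  refine le_antisymm ?_ (min_le_chromaticNumber_pathGraph_power k m)
  rcases min_choice (m + 1) k with h | h <;> rw [h]
  · exact (pathGraph_power_colorable k m).chromaticNumber_le
  · simpa using ((pathGraph k).power m).colorable_of_fintype.chromaticNumber_le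

theorem path_power_chromatic (k m : ℕ) (hk : 0 < k) (hm : 0 < m) :
    ((pathGraph k).power m).chromaticNumber = ((min (m + 1) k : ℕ) : ℕ∞) :=
  path_power_chromatic_general k m
end

section
/- Let G be a graph with maximum degree Δ ≥ 2 and let m < n be positive integers with m even. Then the clique number of G^{m/n} equals (m/2)·Δ + 1. -/
open SimpleGraph

/-!
For the lower bound, the vertices within distance `m / 2` of a branch vertex `v` of maximum
degree `Δ` form a clique of the `m`-th power: `v` itself and `m / 2` internal vertices on each of
the `Δ` subdivided edges at `v`.

For the upper bound, measure positions by `truncDist w`, the distance from a branch vertex `w`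
truncated at `n`; it is `1`-Lipschitz, so it varies by at most `m` on a clique. As `m < n`, a
clique contains at most one branch vertex. If its internal vertices lie on a single edge, their
positions along that edge are distinct and within `m` of each other, which leaves room for at most
`m + 1` vertices. Otherwise a shortest path between internal vertices on distinct edges runs
through a common endpoint, so the edges carrying the clique pairwise meet and contain no triangle:
they form a star at some `w` with at most `Δ` edges. The outermost clique vertices on two such
edges have positions summing to at most `m`, so on average an edge carries at most `m / 2` of them.
-/

open Finset

namespace Finset

variable {α : Type*} {s : Finset α} {f : α → ℕ}

theorem card_le_of_injOn_of_le_add {m : ℕ} (hf : Set.InjOn f s)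
    (h : ∀ x ∈ s, ∀ y ∈ s, f x ≤ f y + m) : #s ≤ m + 1 := by
  obtain rfl | hne := s.eq_empty_or_nonempty
  · simp
  obtain ⟨y, hy, hmin⟩ := s.exists_min_image f hne
  calc #s ≤ #(Icc (f y) (f y + m)) :=
        card_le_card_of_injOn f (fun x hx => mem_Icc.mpr ⟨hmin x hx, h x hx y hy⟩) hf
    _ = m + 1 := by rw [Nat.card_Icc]; omega

theorem card_le_sup_of_injOn (hf : Set.InjOn f s) (hpos : ∀ x ∈ s, 1 ≤ f x) : #s ≤ s.sup f :=
  calc #s ≤ #(Icc 1 (s.sup f)) :=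
        card_le_card_of_injOn f (fun x hx => mem_Icc.mpr ⟨hpos x hx, le_sup hx⟩) hf
    _ = s.sup f := by simp

/-- At most one value exceeds `m / 2`, and any other one compensates for it. -/
theorem two_mul_sum_le_card_mul {m : ℕ} (hs : 2 ≤ #s)
    (h : ∀ a ∈ s, ∀ b ∈ s, a ≠ b → f a + f b ≤ m) : 2 * ∑ x ∈ s, f x ≤ #s * m := by
  classical
  obtain ⟨a, ha, hmax⟩ := s.exists_max_image f (card_pos.mp (by omega))
  obtain ⟨b, hb⟩ : (s.erase a).Nonempty := card_pos.mp (by rw [card_erase_of_mem ha]; omega)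
  have hba : b ≠ a := ne_of_mem_erase hb
  have hbs : b ∈ s := mem_of_mem_erase hb
  have hrest : ∀ c ∈ (s.erase a).erase b, 2 * f c ≤ m := fun c hc => by
    have hc' := mem_of_mem_erase hc
    have := h c (mem_of_mem_erase hc') a ha (ne_of_mem_erase hc')
    have := hmax c (mem_of_mem_erase hc')
    omega
  have hcard : #((s.erase a).erase b) + 2 = #s := by
    rw [card_erase_of_mem hb, card_erase_of_mem ha]; omega
  have hsum := sum_le_card_nsmul _ _ _ hrest
  rw [← mul_sum, smul_eq_mul] at hsum
  rw [← add_sum_erase s f ha, ← add_sum_erase _ f hb, ← hcard]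
  have := h a ha b hbs hba.symm
  nlinarith

end Finset

namespace SimpleGraph

variable {V : Type*}

theorem power_adj_iff_exists_walk {G : SimpleGraph V} {m : ℕ} {x y : V} :
    (G.power m).Adj x y ↔ x ≠ y ∧ ∃ p : G.Walk x y, p.length ≤ m := by
  refine ⟨fun ⟨hne, hr, hd⟩ => ⟨hne, ?_⟩,
    fun ⟨hne, p, hp⟩ => ⟨hne, p.reachable, (dist_le p).trans hp⟩⟩
  obtain ⟨p, hp⟩ := hr.exists_walk_length_eq_dist
  exact ⟨p, hp ▸ hd⟩

theorem isClique_power_of_forall_walk_le {G : SimpleGraph V} {r : ℕ} {v : V} {s : Set V}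
    (h : ∀ x ∈ s, ∃ p : G.Walk v x, p.length ≤ r) : (G.power (2 * r)).IsClique s := by
  intro x hx y hy hxy
  obtain ⟨p, hp⟩ := h x hx
  obtain ⟨q, hq⟩ := h y hy
  refine power_adj_iff_exists_walk.mpr ⟨hxy, p.reverse.append q, ?_⟩
  rw [Walk.length_append, Walk.length_reverse]
  omega

variable {G : SimpleGraph V}

theorem card_le_maxDegree_of_forall_mem [Fintype V] [DecidableRel G.Adj] {w : V}
    {S : Finset G.edgeSet} (hS : ∀ e ∈ S, w ∈ e.1) : #S ≤ G.maxDegree := by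
  classical
  calc #S ≤ #(G.incidenceFinset w) :=
        card_le_card_of_injOn Subtype.val
          (fun e he => (mem_incidenceFinset _ _ _).mpr ⟨e.2, hS e he⟩) Subtype.val_injective.injOn
    _ = G.degree w := card_incidenceFinset_eq_degree _ _
    _ ≤ G.maxDegree := G.degree_le_maxDegree w

variable {n : ℕ}

theorem adj_out_fst_out_snd (e : G.edgeSet) : G.Adj (Quot.out e.1).1 (Quot.out e.1).2 := by
  have he := e.2
  rwa [← Quot.out_eq e.1] at he

theorem mem_edge_iff_eq_out {e : G.edgeSet} {w : V} :
    w ∈ e.1 ↔ w = (Quot.out e.1).1 ∨ w = (Quot.out e.1).2 := by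
  conv_lhs => rw [← Quot.out_eq e.1]
  exact Sym2.mem_iff

open Classical in
/-- The distance from `inl w` in the `n`-subdivision, truncated at `n`. -/
noncomputable def truncDist (G : SimpleGraph V) (n : ℕ) (w : V) :
    V ⊕ (G.edgeSet × Fin (n - 1)) → ℕ
  | Sum.inl u => if u = w then 0 else n
  | Sum.inr (e, i) =>
      if w = (Quot.out e.1).1 then i + 1
      else if w = (Quot.out e.1).2 then n - 1 - i
      else n

variable {w u : V} {e : G.edgeSet} {i : Fin (n - 1)}

@[simp] theorem truncDist_inl_self : truncDist G n w (.inl w) = 0 := if_pos rfl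

theorem truncDist_inl_of_ne (h : u ≠ w) : truncDist G n w (.inl u) = n := if_neg h

theorem truncDist_inr_out_fst : truncDist G n (Quot.out e.1).1 (.inr (e, i)) = i + 1 := if_pos rfl

theorem truncDist_inr_out_snd : truncDist G n (Quot.out e.1).2 (.inr (e, i)) = n - 1 - i := by
  rw [truncDist, if_neg (adj_out_fst_out_snd e).ne.symm, if_pos rfl]

theorem truncDist_inr_of_notMem (hw : w ∉ e.1) : truncDist G n w (.inr (e, i)) = n := by
  rw [mem_edge_iff_eq_out, not_or] at hw
  rw [truncDist, if_neg hw.1, if_neg hw.2]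

theorem one_le_truncDist_inr : 1 ≤ truncDist G n w (.inr (e, i)) := by
  have := i.2
  dsimp only [truncDist]
  split_ifs <;> omega

theorem truncDist_inr_injective (hw : w ∈ e.1) :
    Function.Injective fun i : Fin (n - 1) => truncDist G n w (.inr (e, i)) := by
  intro i j hij
  have := i.2; have := j.2
  rcases mem_edge_iff_eq_out.mp hw with rfl | rfl
  · simp only [truncDist_inr_out_fst] at hij; omega
  · simp only [truncDist_inr_out_snd] at hij; omega

theorem truncDist_inr_add_truncDist_inr {a : V} (he : e.1 = s(w, a)) :
    truncDist G n w (.inr (e, i)) + truncDist G n a (.inr (e, i)) = n := by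
  have := i.2
  rw [← Quot.out_eq e.1, ← Sym2.mk, Sym2.eq_iff] at he
  rcases he with ⟨h1, h2⟩ | ⟨h1, h2⟩ <;>
    rw [← h1, ← h2, truncDist_inr_out_fst, truncDist_inr_out_snd] <;> omega

theorem truncDist_le_add_one {x y : V ⊕ (G.edgeSet × Fin (n - 1))}
    (h : (G.subdivision n).Adj x y) : truncDist G n w x ≤ truncDist G n w y + 1 := by
  rcases x with u | ⟨e, i⟩ <;> rcases y with v | ⟨f, j⟩ <;> dsimp only [subdivision] at h <;>
    dsimp only [truncDist]
  · obtain ⟨rfl, -⟩ := h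
    split_ifs <;> omega
  · have := j.2; have := (adj_out_fst_out_snd f).ne
    rcases h with ⟨rfl, hj⟩ | ⟨rfl, hj⟩ <;> split_ifs <;> grind
  · have := i.2; have := (adj_out_fst_out_snd e).ne
    rcases h with ⟨rfl, hi⟩ | ⟨rfl, hi⟩ <;> split_ifs <;> grind
  · obtain ⟨rfl, hij⟩ := h
    have := i.2; have := j.2
    split_ifs <;> omega

theorem truncDist_le_add_length {x y : V ⊕ (G.edgeSet × Fin (n - 1))}
    (p : (G.subdivision n).Walk x y) : truncDist G n w x ≤ truncDist G n w y + p.length := by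
  induction p with
  | nil => simp
  | cons h _ ih => have := truncDist_le_add_one (w := w) h; rw [Walk.length_cons]; omega

theorem mem_and_truncDist_eq_one_of_adj (h : (G.subdivision n).Adj (.inr (e, i)) (.inl u)) :
    u ∈ e.1 ∧ truncDist G n u (.inr (e, i)) = 1 := by
  have := i.2
  rcases h with ⟨rfl, hi⟩ | ⟨rfl, hi⟩
  · exact ⟨Sym2.out_fst_mem _, by rw [truncDist_inr_out_fst]; omega⟩
  · exact ⟨Sym2.out_snd_mem _, by rw [truncDist_inr_out_snd]; omega⟩

theorem exists_mem_truncDist_add_le_length {x y : V ⊕ (G.edgeSet × Fin (n - 1))}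
    (p : (G.subdivision n).Walk x y) (hx : ∃ i, x = .inr (e, i)) (hy : ∀ j, y ≠ .inr (e, j)) :
    ∃ w ∈ e.1, truncDist G n w x + truncDist G n w y ≤ p.length := by
  induction p with
  | nil => obtain ⟨i, rfl⟩ := hx; exact absurd rfl (hy i)
  | @cons x z y h q ih =>
    obtain ⟨i, rfl⟩ := hx
    rw [Walk.length_cons]
    rcases z with u | ⟨f, j⟩
    · obtain ⟨hu, hu1⟩ := mem_and_truncDist_eq_one_of_adj h
      have := truncDist_le_add_length (w := u) q.reverse
      rw [Walk.length_reverse, truncDist_inl_self] at this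
      exact ⟨u, hu, by omega⟩
    · obtain rfl : e = f := h.1
      obtain ⟨w, hw, hq⟩ := ih ⟨j, rfl⟩ hy
      have := truncDist_le_add_one (w := w) h
      exact ⟨w, hw, by omega⟩

open Classical in
/-- The `k`-th internal vertex of `e` counted from its endpoint `w` (counted from the second
endpoint whenever `w` is not the first one). -/
noncomputable def internalVertex (e : G.edgeSet) (w : V) (k : Fin (n - 1)) :
    V ⊕ (G.edgeSet × Fin (n - 1)) :=
  .inr (e, if (Quot.out e.1).1 = w then k else k.rev)

theorem internalVertex_injective (w : V) :
    Function.Injective fun p : G.edgeSet × Fin (n - 1) => internalVertex p.1 w p.2 := by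
  rintro ⟨e, k⟩ ⟨f, l⟩ h
  simp only [internalVertex, Sum.inr.injEq, Prod.mk.injEq] at h
  obtain ⟨rfl, h⟩ := h
  split_ifs at h
  · rw [h]
  · rw [Fin.rev_inj.mp h]

theorem exists_walk_internalVertex {e : G.edgeSet} {w : V} (hw : w ∈ e.1) (k : Fin (n - 1)) :
    ∃ p : (G.subdivision n).Walk (.inl w) (internalVertex e w k), p.length = k + 1 := by
  obtain ⟨k, hk⟩ := k
  induction k with
  | zero =>
    suffices h : (G.subdivision n).Adj (.inl w) (internalVertex e w ⟨0, hk⟩) from ⟨h.toWalk, rfl⟩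
    simp only [internalVertex]
    split_ifs with h
    · exact .inl ⟨h.symm, rfl⟩
    · refine .inr ⟨?_, ?_⟩
      · exact (mem_edge_iff_eq_out.mp hw).resolve_left (Ne.symm h)
      · simp only [Fin.val_rev]; omega
  | succ k ih =>
    obtain ⟨p, hp⟩ := ih (by omega)
    refine ⟨p.concat ?_, by rw [Walk.length_concat, hp]⟩
    simp only [internalVertex]
    split_ifs
    · exact ⟨rfl, .inl rfl⟩
    · refine ⟨rfl, .inr ?_⟩
      simp only [Fin.val_rev]
      omega

theorem exists_isNClique_power_subdivision [Fintype V] [DecidableRel G.Adj] {r : ℕ}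
    (hr : r ≤ n - 1) (v : V) :
    ∃ s, ((G.subdivision n).power (2 * r)).IsNClique (r * G.degree v + 1) s := by
  classical
  let D : Finset G.edgeSet := (G.incidenceFinset v).subtype (· ∈ G.edgeSet)
  let K : Finset (Fin (n - 1)) := (range r).attachFin fun k hk => by
    rw [mem_range] at hk; omega
  have hD : ∀ e ∈ D, v ∈ e.1 := fun e he =>
    ((mem_incidenceFinset _ _ _).mp (mem_subtype.mp he)).2
  refine ⟨insert (.inl v) ((D ×ˢ K).image fun p => internalVertex p.1 v p.2), ?_, ?_⟩
  · refine isClique_power_of_forall_walk_le (v := .inl v) fun x hx => ?_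
    obtain rfl | hx := mem_insert.mp hx
    · exact ⟨.nil, Nat.zero_le _⟩
    obtain ⟨⟨e, k⟩, hek, rfl⟩ := mem_image.mp hx
    simp only [mem_product, K, mem_attachFin, mem_range] at hek
    obtain ⟨p, hp⟩ := exists_walk_internalVertex (hD e hek.1) k
    exact ⟨p, by omega⟩
  · rw [card_insert_of_notMem (by simp [internalVertex]),
      card_image_of_injective _ (internalVertex_injective v), card_product, card_attachFin,
      card_range, card_subtype,
      filter_true_of_mem fun e he => ((mem_incidenceFinset _ _ _).mp he).1,
      card_incidenceFinset_eq_degree, mul_comm]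

namespace IsClique

variable {m : ℕ} {f : G.edgeSet} {j : Fin (n - 1)}

section

variable {s : Set (V ⊕ (G.edgeSet × Fin (n - 1)))}

theorem truncDist_le_add (hs : ((G.subdivision n).power m).IsClique s)
    {x y : V ⊕ (G.edgeSet × Fin (n - 1))} (hx : x ∈ s) (hy : y ∈ s) :
    truncDist G n w x ≤ truncDist G n w y + m := by
  obtain rfl | hxy := eq_or_ne x y
  · omega
  obtain ⟨-, p, hp⟩ := power_adj_iff_exists_walk.mp (hs hx hy hxy)
  have := truncDist_le_add_length (w := w) p
  omega

theorem eq_of_inl_mem (hmn : m < n) (hs : ((G.subdivision n).power m).IsClique s) {v : V}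
    (hu : .inl u ∈ s) (hv : .inl v ∈ s) : u = v := by
  by_contra huv
  have := hs.truncDist_le_add (w := v) hu hv
  rw [truncDist_inl_of_ne huv, truncDist_inl_self] at this
  omega

theorem mem_of_inl_mem_of_inr_mem (hmn : m < n) (hs : ((G.subdivision n).power m).IsClique s)
    (hu : .inl u ∈ s) (hx : .inr (e, i) ∈ s) : u ∈ e.1 := by
  by_contra hue
  have := hs.truncDist_le_add (w := u) hx hu
  rw [truncDist_inr_of_notMem hue, truncDist_inl_self] at this
  omega

theorem exists_mem_mem_truncDist_add_le (hmn : m < n)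
    (hs : ((G.subdivision n).power m).IsClique s) (hef : e ≠ f)
    (hx : .inr (e, i) ∈ s) (hy : .inr (f, j) ∈ s) :
    ∃ w ∈ e.1, w ∈ f.1 ∧ truncDist G n w (.inr (e, i)) + truncDist G n w (.inr (f, j)) ≤ m := by
  obtain ⟨-, p, hp⟩ := power_adj_iff_exists_walk.mp (hs hx hy (by simp [hef]))
  obtain ⟨w, hwe, hw⟩ := exists_mem_truncDist_add_le_length p ⟨i, rfl⟩ (by simp [hef.symm])
  refine ⟨w, hwe, ?_, by omega⟩
  by_contra hwf
  have := one_le_truncDist_inr (w := w) (e := e) (i := i)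
  rw [truncDist_inr_of_notMem hwf] at hw
  omega

theorem truncDist_add_le (hmn : m < n) (hs : ((G.subdivision n).power m).IsClique s)
    (hef : e ≠ f) (hwe : w ∈ e.1) (hwf : w ∈ f.1) (hx : .inr (e, i) ∈ s) (hy : .inr (f, j) ∈ s) :
    truncDist G n w (.inr (e, i)) + truncDist G n w (.inr (f, j)) ≤ m := by
  obtain ⟨w', hwe', hwf', hw'⟩ := hs.exists_mem_mem_truncDist_add_le hmn hef hx hy
  obtain rfl : w' = w := by
    by_contra hne
    exact hef (Subtype.ext (Sym2.eq_of_ne_mem hne hwe' hwe hwf' hwf))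
  exact hw'

/-- The edges carrying `s` pairwise meet, and around a triangle of them the three pairwise
bounds would add up to `3 * n ≤ 3 * m`; so they form a star. -/
theorem mem_of_common_endpoint (hmn : m < n) (hs : ((G.subdivision n).power m).IsClique s)
    (hef : e ≠ f) (hwe : w ∈ e.1) (hwf : w ∈ f.1) (hx : .inr (e, i) ∈ s) (hy : .inr (f, j) ∈ s)
    {g : G.edgeSet} {k : Fin (n - 1)} (hz : .inr (g, k) ∈ s) : w ∈ g.1 := by
  by_contra hwg
  have hge : g ≠ e := by rintro rfl; exact hwg hwe
  have hgf : g ≠ f := by rintro rfl; exact hwg hwf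
  obtain ⟨a, hae, hag, ha⟩ := hs.exists_mem_mem_truncDist_add_le hmn hge.symm hx hz
  obtain ⟨b, hbf, hbg, hb⟩ := hs.exists_mem_mem_truncDist_add_le hmn hgf.symm hy hz
  have hw := hs.truncDist_add_le hmn hef hwe hwf hx hy
  have hwa : w ≠ a := by rintro rfl; exact hwg hag
  have hwb : w ≠ b := by rintro rfl; exact hwg hbg
  have hab : a ≠ b := by
    rintro rfl
    exact hef (Subtype.ext (Sym2.eq_of_ne_mem hwa hwe hae hwf hbf))
  have := truncDist_inr_add_truncDist_inr (i := i) ((Sym2.mem_and_mem_iff hwa).mp ⟨hwe, hae⟩)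
  have := truncDist_inr_add_truncDist_inr (i := j) ((Sym2.mem_and_mem_iff hwb).mp ⟨hwf, hbf⟩)
  have := truncDist_inr_add_truncDist_inr (i := k) ((Sym2.mem_and_mem_iff hab).mp ⟨hag, hbg⟩)
  omega

end

variable {s : Finset (V ⊕ (G.edgeSet × Fin (n - 1)))}

theorem card_le_of_forall_inr_mem_eq (hmn : m < n)
    (hs : ((G.subdivision n).power m).IsClique (s : Set _)) (hx : .inr (e, i) ∈ s)
    (he : ∀ f j, .inr (f, j) ∈ s → f = e) : #s ≤ m + 1 := by
  obtain ⟨w, hwe, hwL⟩ : ∃ w ∈ e.1, ∀ u, .inl u ∈ s → u = w := by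
    by_cases hu : ∃ u, .inl u ∈ s
    · obtain ⟨u, hu⟩ := hu
      exact ⟨u, hs.mem_of_inl_mem_of_inr_mem hmn hu hx, fun v hv => hs.eq_of_inl_mem hmn hv hu⟩
    · push Not at hu
      exact ⟨_, Sym2.out_fst_mem _, fun u h => (hu u h).elim⟩
  refine card_le_of_injOn_of_le_add (f := truncDist G n w) ?_
    fun x hx y hy => hs.truncDist_le_add hx hy
  rintro (u | ⟨f, j⟩) hu (v | ⟨g, k⟩) hv huv
  · rw [hwL u hu, hwL v hv]
  · have := one_le_truncDist_inr (w := w) (e := g) (i := k)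
    rw [hwL u hu, truncDist_inl_self] at huv
    omega
  · have := one_le_truncDist_inr (w := w) (e := f) (i := j)
    rw [hwL v hv, truncDist_inl_self] at huv
    omega
  · obtain rfl := he f j hu
    obtain rfl := he g k hv
    rw [truncDist_inr_injective hwe huv]

theorem two_mul_card_toRight_le [Fintype V] [DecidableRel G.Adj] (hmn : m < n)
    (hs : ((G.subdivision n).power m).IsClique (s : Set _)) (hef : e ≠ f)
    (hx : .inr (e, i) ∈ s) (hy : .inr (f, j) ∈ s) : 2 * #s.toRight ≤ m * G.maxDegree := by
  classical
  obtain ⟨w, hwe, hwf, -⟩ := hs.exists_mem_mem_truncDist_add_le hmn hef hx hy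
  have hw : ∀ p ∈ s.toRight, w ∈ p.1.1 := fun p hp =>
    hs.mem_of_common_endpoint hmn hef hwe hwf hx hy (mem_toRight.mp hp)
  set T := s.toRight
  set S := T.image Prod.fst
  -- `M g` is the position, seen from `w`, of the outermost vertex of `s` on the edge `g`.
  set M : G.edgeSet → ℕ := fun g => {p ∈ T | p.1 = g}.sup fun p => truncDist G n w (.inr p)
  have hfib : ∀ g ∈ S, #{p ∈ T | p.1 = g} ≤ M g := fun g _ => by
    refine card_le_sup_of_injOn ?_ fun p _ => one_le_truncDist_inr
    rintro ⟨g₁, a⟩ hp ⟨g₂, b⟩ hq hpq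
    obtain ⟨hpT, rfl⟩ := mem_filter.mp hp
    obtain ⟨-, rfl⟩ := mem_filter.mp hq
    rw [truncDist_inr_injective (hw _ hpT) hpq]
  have hfib_nonempty : ∀ g ∈ S, {p ∈ T | p.1 = g}.Nonempty := fun g hg => by
    obtain ⟨p, hp, rfl⟩ := mem_image.mp hg
    exact ⟨p, mem_filter.mpr ⟨hp, rfl⟩⟩
  have hM : ∀ g ∈ S, ∀ g' ∈ S, g ≠ g' → M g + M g' ≤ m := by
    intro g hg g' hg' hne
    obtain ⟨⟨g₁, a⟩, hp, hMp⟩ :=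
      exists_mem_eq_sup _ (hfib_nonempty g hg) fun p => truncDist G n w (.inr p)
    obtain ⟨⟨g₂, b⟩, hq, hMq⟩ :=
      exists_mem_eq_sup _ (hfib_nonempty g' hg') fun p => truncDist G n w (.inr p)
    obtain ⟨hpT, rfl⟩ := mem_filter.mp hp
    obtain ⟨hqT, rfl⟩ := mem_filter.mp hq
    simp only [M, hMp, hMq]
    exact hs.truncDist_add_le hmn hne (hw _ hpT) (hw _ hqT) (mem_toRight.mp hpT)
      (mem_toRight.mp hqT)
  have hS : 2 ≤ #S := one_lt_card.mpr ⟨e, mem_image_of_mem Prod.fst (mem_toRight.mpr hx),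
    f, mem_image_of_mem Prod.fst (mem_toRight.mpr hy), hef⟩
  calc 2 * #T = 2 * ∑ g ∈ S, #{p ∈ T | p.1 = g} := by rw [← card_eq_sum_card_image]
    _ ≤ 2 * ∑ g ∈ S, M g := by gcongr with g hg; exact hfib g hg
    _ ≤ #S * m := two_mul_sum_le_card_mul hS hM
    _ ≤ G.maxDegree * m := by
        refine Nat.mul_le_mul_right _ (card_le_maxDegree_of_forall_mem (w := w) fun g hg => ?_)
        obtain ⟨p, hp, rfl⟩ := mem_image.mp hg
        exact hw p hp
    _ = m * G.maxDegree := mul_comm _ _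

theorem card_le_max_of_subdivision [Fintype V] [DecidableRel G.Adj] (hmn : m < n)
    (hs : ((G.subdivision n).power m).IsClique (s : Set _)) :
    #s ≤ max (m + 1) (m * G.maxDegree / 2 + 1) := by
  have hL : #s.toLeft ≤ 1 := card_le_one.mpr fun u hu v hv =>
    hs.eq_of_inl_mem hmn (mem_toLeft.mp hu) (mem_toLeft.mp hv)
  have hsplit := card_toLeft_add_card_toRight (u := s)
  obtain hT | ⟨⟨e, i⟩, hx⟩ := s.toRight.eq_empty_or_nonempty
  · rw [hT, card_empty] at hsplit
    omega
  rw [mem_toRight] at hx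
  by_cases h : ∃ f j, .inr (f, j) ∈ s ∧ f ≠ e
  · obtain ⟨f, j, hy, hfe⟩ := h
    have := hs.two_mul_card_toRight_le hmn hfe.symm hx hy
    omega
  · push Not at h
    exact le_max_of_le_left (hs.card_le_of_forall_inr_mem_eq hmn hx h)

end IsClique

end SimpleGraph

theorem cliqueNum_fractional_power_even_general {V : Type*} [Fintype V]
    (G : SimpleGraph V) [DecidableRel G.Adj] (hG : 2 ≤ G.maxDegree)
    (m n : ℕ) (hmn : m < n) (hme : Even m) :
    ((G.subdivision n).power m).cliqueNum = m / 2 * G.maxDegree + 1 := by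
  obtain ⟨k, rfl⟩ := hme
  have hk : (k + k) / 2 = k := by omega
  rw [hk]
  apply le_antisymm
  · obtain ⟨s, hs⟩ := ((G.subdivision n).power (k + k)).exists_isNClique_cliqueNum
    have hmax := hs.card_eq ▸ hs.isClique.card_le_max_of_subdivision hmn
    have : (k + k) * G.maxDegree = 2 * (k * G.maxDegree) := by ring
    have : k * 2 ≤ k * G.maxDegree := Nat.mul_le_mul_left k hG
    omega
  · have : Nonempty V := by
      contrapose! hG
      simp
    obtain ⟨v, hv⟩ := G.exists_maximal_degree_vertex
    obtain ⟨s, hs⟩ := exists_isNClique_power_subdivision (G := G) (n := n) (r := k) (by omega) v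
    rw [← two_mul, hv, ← hs.card_eq]
    exact hs.isClique.card_le_cliqueNum

theorem cliqueNum_fractional_power_even {V : Type*} [Fintype V]
    (G : SimpleGraph V) [DecidableRel G.Adj] (hG : 2 ≤ G.maxDegree)
    (m n : ℕ) (hm : 0 < m) (hmn : m < n) (hme : Even m) :
    ((G.subdivision n).power m).cliqueNum = m / 2 * G.maxDegree + 1 :=
  cliqueNum_fractional_power_even_general G hG m n hmn hme
end

section
/- Let G be a graph with maximum degree Δ ≥ 2 and let m < n be positive integers with m odd. Then the clique number of G^{m/n} equals ((m-1)/2)·Δ + 2. -/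
open SimpleGraph

/-!
Distances in `G.subdivision n` are bounded below by 1-Lipschitz potentials: `n` times the
`G`-distance from a branch vertex, interpolated along the subdivided edges. Since `m < n`, a
clique of `G^{m/n}` contains at most one branch vertex, and two of its internal vertices on
different edges `e ≠ f` force `e` and `f` to share an endpoint `u`, with the distances from `u`
adding up to at most `m`; three pairwise distinct edges without a common endpoint would form a
triangle of total length `3n`, so all the clique's internal vertices lie on edges at one branch
vertex `u` (or on a single edge). With `m = 2r + 1`, at most one edge then carries a vertex at
distance `> r` from `u`, which bounds the clique by `Δ r + 1` internal vertices plus `u`. The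
bound is attained around a vertex of maximum degree: the `r` internal vertices nearest to it on
each edge, one more at distance `r + 1`, and the vertex itself.
-/

namespace Finset

theorem card_le_add_one_of_forall_le_add {S : Finset ℕ} {m : ℕ}
    (h : ∀ a ∈ S, ∀ b ∈ S, a ≤ b + m) : #S ≤ m + 1 := by
  rcases S.eq_empty_or_nonempty with rfl | hne
  · simp
  calc #S ≤ #(Icc (S.min' hne) (S.min' hne + m)) :=
        card_le_card fun a ha => mem_Icc.mpr ⟨S.min'_le a ha, h a ha _ (S.min'_mem hne)⟩
    _ = m + 1 := by rw [Nat.card_Icc]; omega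

theorem card_le_mul_add_one_of_add_le {α : Type*} [DecidableEq α] {Q : Finset (α × ℕ)}
    {Δ r : ℕ} (hΔ : 2 ≤ Δ) (hfst : #(Q.image Prod.fst) ≤ Δ)
    (hsnd : ∀ p ∈ Q, 1 ≤ p.2 ∧ p.2 ≤ 2 * r + 1)
    (hpair : ∀ p ∈ Q, ∀ q ∈ Q, p.1 ≠ q.1 → p.2 + q.2 ≤ 2 * r + 1) : #Q ≤ Δ * r + 1 := by
  rcases Q.eq_empty_or_nonempty with rfl | hne
  · simp
  obtain ⟨p₀, hp₀, hmax⟩ := Q.exists_max_image Prod.snd hne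
  set M := p₀.2
  -- every element off the fibre of `p₀.1` has second coordinate at most `k`
  set k := min M (2 * r + 1 - M)
  have hsub : Q ⊆ {p₀.1} ×ˢ Icc 1 M ∪ (Q.image Prod.fst).erase p₀.1 ×ˢ Icc 1 k := by
    intro p hp
    simp only [mem_union, mem_product, mem_singleton, mem_Icc, mem_erase, mem_image]
    by_cases h : p.1 = p₀.1
    · exact .inl ⟨h, (hsnd p hp).1, hmax p hp⟩
    · have := hpair p hp p₀ hp₀ h
      exact .inr ⟨⟨h, p, hp, rfl⟩, (hsnd p hp).1, le_min (hmax p hp) (by omega)⟩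
  have herase : #((Q.image Prod.fst).erase p₀.1) ≤ Δ - 1 := by
    rw [card_erase_of_mem (mem_image_of_mem _ hp₀)]
    omega
  have hMk : M + k ≤ 2 * r + 1 := by have := (hsnd p₀ hp₀).2; omega
  have hkr : k ≤ r := by omega
  obtain ⟨d, rfl⟩ : ∃ d, Δ = d + 2 := ⟨Δ - 2, by omega⟩
  calc #Q ≤ M + #((Q.image Prod.fst).erase p₀.1) * k := by
        simpa using (card_le_card hsub).trans (card_union_le _ _)
    _ ≤ M + (d + 1) * k := by gcongr; omega
    _ = M + k + d * k := by ring
    _ ≤ (d + 2) * r + 1 := by nlinarith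

end Finset

namespace SimpleGraph

open Finset

section Metric

variable {W : Type*} {H : SimpleGraph W} {m : ℕ}

theorem le_add_edist_of_le_add_one {f : W → ℕ∞} (hf : ∀ a b, H.Adj a b → f a ≤ f b + 1)
    (x y : W) : f x ≤ f y + H.edist x y := by
  rcases eq_or_ne (H.edist x y) ⊤ with h | h
  · simp [h]
  obtain ⟨p, hp⟩ := exists_walk_of_edist_ne_top h
  rw [← hp]
  clear hp h
  induction p with
  | nil => simp
  | cons hadj p ih =>
    calc _ ≤ _ + 1 := hf _ _ hadj
      _ ≤ _ + p.length + 1 := by gcongr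
      _ = _ := by rw [Walk.length_cons]; push_cast; ring

theorem edist_le_edist_add_one_of_adj {a b c : W} (h : H.Adj b c) :
    H.edist a c ≤ H.edist a b + 1 :=
  H.edist_triangle.trans (by gcongr; exact (edist_eq_one_iff_adj.mpr h).le)

theorem power_adj_iff_edist_le {x y : W} :
    (H.power m).Adj x y ↔ x ≠ y ∧ H.edist x y ≤ m := by
  refine and_congr_right fun _ => ⟨fun ⟨hr, hd⟩ => hr.coe_dist_eq_edist ▸ Nat.cast_le.mpr hd,
    fun hd => ⟨reachable_of_edist_ne_top (ne_top_of_le_ne_top (ENat.natCast_ne_top m) hd),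
      ENat.toNat_le_of_le_natCast hd⟩⟩

theorem IsClique.edist_le_of_power {s : Set W} (hs : (H.power m).IsClique s) {x y : W}
    (hx : x ∈ s) (hy : y ∈ s) : H.edist x y ≤ m := by
  rcases eq_or_ne x y with rfl | hxy
  · simp
  · exact (power_adj_iff_edist_le.mp (hs hx hy hxy)).2

end Metric

variable {V : Type*} {G : SimpleGraph V} {n m r : ℕ}

/-- The orientation of `e` fixed by `subdivision`: `(e, 0)` is adjacent to `edgeSrc e`. -/
noncomputable def edgeSrc (e : G.edgeSet) : V := (Quot.out (e : Sym2 V)).1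

noncomputable def edgeTgt (e : G.edgeSet) : V := (Quot.out (e : Sym2 V)).2

theorem mk_edgeSrc_edgeTgt (e : G.edgeSet) : s(edgeSrc e, edgeTgt e) = e := Quot.out_eq _

theorem adj_edgeSrc_edgeTgt (e : G.edgeSet) : G.Adj (edgeSrc e) (edgeTgt e) := by
  rw [← mem_edgeSet, mk_edgeSrc_edgeTgt]
  exact e.2

theorem mem_edge_iff {e : G.edgeSet} {v : V} :
    v ∈ (e : Sym2 V) ↔ v = edgeSrc e ∨ v = edgeTgt e := by
  rw [← mk_edgeSrc_edgeTgt e, Sym2.mem_iff]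

theorem subdivision_adj_inl_inr {u : V} {e : G.edgeSet} {i : Fin (n - 1)} :
    (G.subdivision n).Adj (.inl u) (.inr (e, i)) ↔
      u = edgeSrc e ∧ (i : ℕ) = 0 ∨ u = edgeTgt e ∧ (i : ℕ) = n - 2 :=
  Iff.rfl

theorem subdivision_adj_inr_inl {u : V} {e : G.edgeSet} {i : Fin (n - 1)} :
    (G.subdivision n).Adj (.inr (e, i)) (.inl u) ↔
      u = edgeSrc e ∧ (i : ℕ) = 0 ∨ u = edgeTgt e ∧ (i : ℕ) = n - 2 :=
  Iff.rfl

theorem eq_of_mem_of_mem_of_ne {e f : G.edgeSet} (hef : e ≠ f) {u w : V}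
    (hue : u ∈ (e : Sym2 V)) (huf : u ∈ (f : Sym2 V)) (hwe : w ∈ (e : Sym2 V))
    (hwf : w ∈ (f : Sym2 V)) : u = w := by
  by_contra huw
  exact hef (Subtype.ext (Sym2.eq_of_ne_mem huw hue hwe huf hwf))

open Classical in
/-- The distance in `G.subdivision n` from the endpoint `u` of `e` to the internal vertex
`(e, i)` (junk when `u ∉ e`). -/
noncomputable def edgePos (n : ℕ) (u : V) (e : G.edgeSet) (i : Fin (n - 1)) : ℕ :=
  if u = edgeSrc e then i + 1 else n - 1 - i

theorem edgePos_edgeSrc (e : G.edgeSet) (i : Fin (n - 1)) : edgePos n (edgeSrc e) e i = i + 1 :=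
  if_pos rfl

theorem edgePos_edgeTgt (e : G.edgeSet) (i : Fin (n - 1)) :
    edgePos n (edgeTgt e) e i = n - 1 - i :=
  if_neg (adj_edgeSrc_edgeTgt e).ne'

theorem one_le_edgePos (u : V) (e : G.edgeSet) (i : Fin (n - 1)) : 1 ≤ edgePos n u e i := by
  have := i.2
  unfold edgePos
  split <;> omega

theorem edgePos_injective (u : V) (e : G.edgeSet) :
    Function.Injective (edgePos (G := G) n u e) := by
  intro i j h
  have := i.2
  have := j.2
  unfold edgePos at h
  split at h <;> exact Fin.ext (by omega)

theorem edgePos_add_edgePos {u v : V} {e : G.edgeSet} (huv : u ≠ v) (hu : u ∈ (e : Sym2 V))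
    (hv : v ∈ (e : Sym2 V)) (i : Fin (n - 1)) : edgePos n u e i + edgePos n v e i = n := by
  have := i.2
  rcases mem_edge_iff.mp hu with rfl | rfl <;> rcases mem_edge_iff.mp hv with rfl | rfl <;>
    simp only [ne_eq, not_true_eq_false] at huv <;>
    simp only [edgePos_edgeSrc, edgePos_edgeTgt] <;> omega

theorem exists_edgePos_eq (u : V) (e : G.edgeSet) {k : ℕ} (hk : 1 ≤ k) (hkn : k ≤ n - 1) :
    ∃ i, edgePos n u e i = k := by
  unfold edgePos
  split
  · exact ⟨⟨k - 1, by omega⟩, by simp only; omega⟩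
  · exact ⟨⟨n - 1 - k, by omega⟩, by simp only; omega⟩

/-- Polar coordinates of the internal vertex `p` around the branch vertex `u`. -/
noncomputable def edgeCoord (n : ℕ) (u : V) (p : G.edgeSet × Fin (n - 1)) : Sym2 V × ℕ :=
  (p.1, edgePos n u p.1 p.2)

theorem edgeCoord_injective (u : V) : Function.Injective (edgeCoord (G := G) n u) := by
  rintro ⟨e, i⟩ ⟨f, j⟩ h
  simp only [edgeCoord, Prod.mk.injEq] at h
  obtain rfl := Subtype.ext h.1
  rw [edgePos_injective u e h.2]

theorem edist_inl_edgeSrc_le (e : G.edgeSet) (k : ℕ) (hk : k < n - 1) :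
    (G.subdivision n).edist (.inl (edgeSrc e)) (.inr (e, ⟨k, hk⟩)) ≤ k + 1 := by
  induction k with
  | zero => simpa using (edist_eq_one_iff_adj.mpr (Or.inl ⟨rfl, rfl⟩)).le
  | succ k ih =>
    have hadj : (G.subdivision n).Adj (.inr (e, ⟨k, by omega⟩)) (.inr (e, ⟨k + 1, hk⟩)) :=
      ⟨rfl, Or.inl rfl⟩
    refine (edist_le_edist_add_one_of_adj hadj).trans ?_
    push_cast
    gcongr
    exact ih _

theorem edist_inl_edgeTgt_le (e : G.edgeSet) (k : ℕ) (i : Fin (n - 1)) (hik : i + k = n - 2) :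
    (G.subdivision n).edist (.inl (edgeTgt e)) (.inr (e, i)) ≤ k + 1 := by
  induction k generalizing i with
  | zero =>
    simpa using (edist_eq_one_iff_adj.mpr (Or.inr ⟨rfl, by simpa using hik⟩)).le
  | succ k ih =>
    have hadj : (G.subdivision n).Adj (.inr (e, ⟨i + 1, by omega⟩)) (.inr (e, i)) :=
      ⟨rfl, Or.inr rfl⟩
    refine (edist_le_edist_add_one_of_adj hadj).trans ?_
    push_cast
    gcongr
    exact ih _ (by simp only; omega)

theorem edist_inl_inr_le_edgePos {u : V} {e : G.edgeSet} (hu : u ∈ (e : Sym2 V))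
    (i : Fin (n - 1)) : (G.subdivision n).edist (.inl u) (.inr (e, i)) ≤ edgePos n u e i := by
  have := i.2
  rcases mem_edge_iff.mp hu with rfl | rfl
  · simpa [edgePos_edgeSrc] using edist_inl_edgeSrc_le e i i.2
  · rw [edgePos_edgeTgt, show n - 1 - (i : ℕ) = n - 2 - i + 1 by omega]
    exact_mod_cast edist_inl_edgeTgt_le e _ i (by omega)

/-- `n` times the distance from `u` in `G`, interpolated along the subdivided edges: a lower
bound for the distance from `u` in `G.subdivision n`. -/
noncomputable def branchPotential (G : SimpleGraph V) (n : ℕ) (u : V) :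
    V ⊕ (G.edgeSet × Fin (n - 1)) → ℕ∞
  | .inl w => n * G.edist u w
  | .inr (e, i) => min (n * G.edist u (edgeSrc e) + (i + 1 : ℕ))
      (n * G.edist u (edgeTgt e) + (n - 1 - i : ℕ))

theorem branchPotential_inl_self (u : V) : branchPotential G n u (.inl u) = 0 := by
  simp [branchPotential]

theorem branchPotential_le_add_one (hn : 2 ≤ n) (u : V) (a b : V ⊕ (G.edgeSet × Fin (n - 1)))
    (hab : (G.subdivision n).Adj a b) : branchPotential G n u a ≤ branchPotential G n u b + 1 := by
  have step : ∀ {x y : V}, G.Adj x y → (n : ℕ∞) * G.edist u y ≤ n * G.edist u x + n :=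
    fun h => calc
      (n : ℕ∞) * G.edist u _ ≤ n * (G.edist u _ + 1) := by
        gcongr
        exact edist_le_edist_add_one_of_adj h
      _ = _ := by ring
  rcases a with w | ⟨e, i⟩ <;> rcases b with w' | ⟨f, j⟩
  · exact absurd hab.1 (by omega)
  · have := j.2
    simp only [branchPotential, ← min_add_add_right, le_min_iff, add_assoc]
    rcases subdivision_adj_inl_inr.mp hab with ⟨rfl, hj⟩ | ⟨rfl, hj⟩
    · refine ⟨le_self_add, (step (adj_edgeSrc_edgeTgt f).symm).trans ?_⟩
      gcongr
      exact_mod_cast (by omega : n ≤ n - 1 - j + 1)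
    · refine ⟨(step (adj_edgeSrc_edgeTgt f)).trans ?_, le_self_add⟩
      gcongr
      exact_mod_cast (by omega : n ≤ j + 1 + 1)
  · have := i.2
    simp only [branchPotential, min_le_iff]
    rcases subdivision_adj_inr_inl.mp hab with ⟨rfl, hi⟩ | ⟨rfl, hi⟩
    · exact .inl (add_le_add_right (by exact_mod_cast (by omega : (i : ℕ) + 1 ≤ 1)) _)
    · exact .inr (add_le_add_right (by exact_mod_cast (by omega : n - 1 - (i : ℕ) ≤ 1)) _)
  · obtain ⟨rfl, hij⟩ := hab
    have := i.2
    have := j.2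
    simp only [branchPotential, ← min_add_add_right, add_assoc]
    gcongr <;> exact_mod_cast (by omega)

theorem branchPotential_le_edist (hn : 2 ≤ n) (u : V) (x : V ⊕ (G.edgeSet × Fin (n - 1))) :
    branchPotential G n u x ≤ (G.subdivision n).edist (.inl u) x := by
  simpa [branchPotential_inl_self, edist_comm] using
    le_add_edist_of_le_add_one (branchPotential_le_add_one hn u) x (.inl u)

theorem eq_and_add_le_of_add_mul_edist_add_le (hmn : m < n) {u w : V} {c k : ℕ}
    (h : (c : ℕ∞) + (n * G.edist u w + k) ≤ m) : u = w ∧ c + k ≤ m := by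
  have hd : G.edist u w = 0 := by
    by_contra hd
    have : (n : ℕ∞) ≤ m := calc
      (n : ℕ∞) = n * 1 := (mul_one _).symm
      _ ≤ n * G.edist u w := by gcongr; exact Order.one_le_iff_pos.mpr (pos_iff_ne_zero.mpr hd)
      _ ≤ c + (n * G.edist u w + k) := le_self_add.trans le_add_self
      _ ≤ m := h
    exact absurd (by exact_mod_cast this) hmn.not_ge
  rw [hd, mul_zero, zero_add] at h
  exact ⟨edist_eq_zero_iff.mp hd, by exact_mod_cast h⟩

theorem mem_and_add_edgePos_le (hmn : m < n) {c : ℕ} {u : V} {e : G.edgeSet} {i : Fin (n - 1)}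
    (h : (c : ℕ∞) + branchPotential G n u (.inr (e, i)) ≤ m) :
    u ∈ (e : Sym2 V) ∧ c + edgePos n u e i ≤ m := by
  simp only [branchPotential, ← min_add_add_left, min_le_iff] at h
  rcases h with h | h
  · obtain ⟨rfl, h⟩ := eq_and_add_le_of_add_mul_edist_add_le hmn h
    exact ⟨mem_edge_iff.mpr (.inl rfl), by rwa [edgePos_edgeSrc]⟩
  · obtain ⟨rfl, h⟩ := eq_and_add_le_of_add_mul_edist_add_le hmn h
    exact ⟨mem_edge_iff.mpr (.inr rfl), by rwa [edgePos_edgeTgt]⟩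

theorem eq_of_edist_inl_inl_le (hn : 2 ≤ n) (hmn : m < n) {u w : V}
    (h : (G.subdivision n).edist (.inl u) (.inl w) ≤ m) : u = w :=
  (eq_and_add_le_of_add_mul_edist_add_le (c := 0) (k := 0) hmn
    (by simpa [branchPotential] using (branchPotential_le_edist hn u _).trans h)).1

theorem mem_and_edgePos_le_of_edist_le (hmn : m < n) {u : V} {e : G.edgeSet} {i : Fin (n - 1)}
    (h : (G.subdivision n).edist (.inl u) (.inr (e, i)) ≤ m) :
    u ∈ (e : Sym2 V) ∧ edgePos n u e i ≤ m := by
  simpa using mem_and_add_edgePos_le (c := 0) hmn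
    (by simpa using (branchPotential_le_edist (by have := i.2; omega) u _).trans h)

open Classical in
noncomputable def alongEdge (e : G.edgeSet) (i : Fin (n - 1)) :
    V ⊕ (G.edgeSet × Fin (n - 1)) → ℕ∞
  | .inl _ => ⊤
  | .inr (f, j) => if f = e then ((i - j + (j - i) : ℕ) : ℕ∞) else ⊤

/-- A lower bound for the distance from the internal vertex `(e, i)` in `G.subdivision n`: a
shortest path either leaves the path of `e` through one of its endpoints or stays on it. -/
noncomputable def internalPotential (G : SimpleGraph V) (n : ℕ) (e : G.edgeSet)
    (i : Fin (n - 1)) (z : V ⊕ (G.edgeSet × Fin (n - 1))) : ℕ∞ :=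
  min (min (edgePos n (edgeSrc e) e i + branchPotential G n (edgeSrc e) z)
    (edgePos n (edgeTgt e) e i + branchPotential G n (edgeTgt e) z)) (alongEdge e i z)

theorem internalPotential_le_add_one (e : G.edgeSet) (i : Fin (n - 1))
    (a b : V ⊕ (G.edgeSet × Fin (n - 1))) (hab : (G.subdivision n).Adj a b) :
    internalPotential G n e i a ≤ internalPotential G n e i b + 1 := by
  have := i.2
  have hpot : ∀ w, (edgePos n w e i : ℕ∞) + branchPotential G n w a ≤
      edgePos n w e i + branchPotential G n w b + 1 := fun w => by
    rw [add_assoc]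
    gcongr
    exact branchPotential_le_add_one (by omega) w a b hab
  rw [internalPotential, internalPotential, ← min_add_add_right, ← min_add_add_right]
  refine le_min ((min_le_left _ _).trans (min_le_min (hpot _) (hpot _))) ?_
  rcases b with w | ⟨f, j⟩
  · simp [alongEdge]
  by_cases hfe : f = e
  · subst hfe
    have := j.2
    rcases a with w | ⟨f', j'⟩
    · simp only [alongEdge, ↓reduceIte]
      rcases subdivision_adj_inl_inr.mp hab with ⟨rfl, hj⟩ | ⟨rfl, hj⟩
      · refine (min_le_left _ _).trans ((min_le_left _ _).trans ?_)
        rw [branchPotential_inl_self, add_zero, edgePos_edgeSrc]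
        exact_mod_cast (by omega : (i : ℕ) + 1 ≤ i - j + (j - i) + 1)
      · refine (min_le_left _ _).trans ((min_le_right _ _).trans ?_)
        rw [branchPotential_inl_self, add_zero, edgePos_edgeTgt]
        exact_mod_cast (by omega : n - 1 - (i : ℕ) ≤ i - j + (j - i) + 1)
    · obtain ⟨rfl, hj⟩ := hab
      refine (min_le_right _ _).trans ?_
      simp only [alongEdge, ↓reduceIte]
      exact_mod_cast (by omega : (i : ℕ) - j' + (j' - i) ≤ i - j + (j - i) + 1)
  · simp [alongEdge, hfe]

theorem internalPotential_le_edist (e : G.edgeSet) (i : Fin (n - 1))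
    (z : V ⊕ (G.edgeSet × Fin (n - 1))) :
    internalPotential G n e i z ≤ (G.subdivision n).edist (.inr (e, i)) z := by
  have h0 : internalPotential G n e i (.inr (e, i)) = 0 :=
    nonpos_iff_eq_zero.mp ((min_le_right _ _).trans (by simp [alongEdge]))
  simpa [h0, edist_comm] using
    le_add_edist_of_le_add_one (internalPotential_le_add_one e i) z (.inr (e, i))

theorem exists_shared_endpoint_or_eq_of_edist_le (hmn : m < n) {e f : G.edgeSet}
    {i j : Fin (n - 1)} (h : (G.subdivision n).edist (.inr (e, i)) (.inr (f, j)) ≤ m) :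
    (∃ u, u ∈ (e : Sym2 V) ∧ u ∈ (f : Sym2 V) ∧ edgePos n u e i + edgePos n u f j ≤ m) ∨
      f = e ∧ (i : ℕ) - j + (j - i) ≤ m := by
  have h' := (internalPotential_le_edist e i _).trans h
  simp only [internalPotential, min_le_iff] at h'
  rcases h' with (h' | h') | h'
  · obtain ⟨hf, hle⟩ := mem_and_add_edgePos_le hmn h'
    exact .inl ⟨_, mem_edge_iff.mpr (.inl rfl), hf, hle⟩
  · obtain ⟨hf, hle⟩ := mem_and_add_edgePos_le hmn h'
    exact .inl ⟨_, mem_edge_iff.mpr (.inr rfl), hf, hle⟩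
  · simp only [alongEdge] at h'
    split_ifs at h' with hfe
    · exact .inr ⟨hfe, by exact_mod_cast h'⟩
    · simp at h'

theorem exists_shared_endpoint_of_edist_le (hmn : m < n) {e f : G.edgeSet} (hef : e ≠ f)
    {i j : Fin (n - 1)} (h : (G.subdivision n).edist (.inr (e, i)) (.inr (f, j)) ≤ m) :
    ∃ u, u ∈ (e : Sym2 V) ∧ u ∈ (f : Sym2 V) ∧ edgePos n u e i + edgePos n u f j ≤ m :=
  (exists_shared_endpoint_or_eq_of_edist_le hmn h).resolve_right fun h' => hef h'.1.symm

theorem edgePos_add_edgePos_le_of_edist_le (hmn : m < n) {e f : G.edgeSet} (hef : e ≠ f)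
    {u : V} (hue : u ∈ (e : Sym2 V)) (huf : u ∈ (f : Sym2 V)) {i j : Fin (n - 1)}
    (h : (G.subdivision n).edist (.inr (e, i)) (.inr (f, j)) ≤ m) :
    edgePos n u e i + edgePos n u f j ≤ m := by
  obtain ⟨w, hwe, hwf, hw⟩ := exists_shared_endpoint_of_edist_le hmn hef h
  rwa [eq_of_mem_of_mem_of_ne hef hue huf hwe hwf]

theorem le_add_of_edist_le (hmn : m < n) {e : G.edgeSet} {i j : Fin (n - 1)}
    (h : (G.subdivision n).edist (.inr (e, i)) (.inr (e, j)) ≤ m) : (j : ℕ) ≤ i + m := by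
  have := i.2
  have := j.2
  rcases exists_shared_endpoint_or_eq_of_edist_le hmn h with ⟨u, hu, -, hle⟩ | ⟨-, hle⟩
  · rcases mem_edge_iff.mp hu with rfl | rfl
    · rw [edgePos_edgeSrc, edgePos_edgeSrc] at hle
      omega
    · rw [edgePos_edgeTgt, edgePos_edgeTgt] at hle
      omega
  · omega

theorem card_le_of_forall_edgePos_le [Fintype V] [DecidableRel G.Adj] (hG : 2 ≤ G.maxDegree)
    {u : V} {t : Finset (G.edgeSet × Fin (n - 1))}
    (hu : ∀ p ∈ t, u ∈ (p.1 : Sym2 V) ∧ edgePos n u p.1 p.2 ≤ 2 * r + 1)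
    (hpair : ∀ p ∈ t, ∀ q ∈ t, p.1 ≠ q.1 →
      edgePos n u p.1 p.2 + edgePos n u q.1 q.2 ≤ 2 * r + 1) :
    #t ≤ G.maxDegree * r + 1 := by
  classical
  rw [← card_image_of_injective t (edgeCoord_injective u)]
  refine card_le_mul_add_one_of_add_le hG ?_ ?_ ?_
  · have hsub : (t.image (edgeCoord n u)).image Prod.fst ⊆ G.incidenceFinset u := by
      intro e he
      obtain ⟨_, hx, rfl⟩ := mem_image.mp he
      obtain ⟨p, hp, rfl⟩ := mem_image.mp hx
      exact (G.mem_incidenceFinset u _).mpr ⟨p.1.2, (hu p hp).1⟩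
    exact (card_le_card hsub).trans
      ((G.card_incidenceFinset_eq_degree u).trans_le (G.degree_le_maxDegree u))
  · intro _ hx
    obtain ⟨p, hp, rfl⟩ := mem_image.mp hx
    exact ⟨one_le_edgePos u p.1 p.2, (hu p hp).2⟩
  · intro _ hx _ hy hpq
    obtain ⟨p, hp, rfl⟩ := mem_image.mp hx
    obtain ⟨q, hq, rfl⟩ := mem_image.mp hy
    exact hpair p hp q hq fun h => hpq (congrArg Subtype.val h)

section Clique

variable {s : Finset (V ⊕ (G.edgeSet × Fin (n - 1)))}

theorem card_toLeft_le_one (hn : 2 ≤ n) (hmn : m < n)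
    (hs : ((G.subdivision n).power m).IsClique (s : Set (V ⊕ (G.edgeSet × Fin (n - 1))))) :
    #s.toLeft ≤ 1 :=
  card_le_one.mpr fun _ hu _ hw =>
    eq_of_edist_inl_inl_le hn hmn (hs.edist_le_of_power (mem_toLeft.mp hu) (mem_toLeft.mp hw))

theorem forall_mem_toRight_edgePos_le_of_inl_mem (hmn : m < n)
    (hs : ((G.subdivision n).power m).IsClique (s : Set (V ⊕ (G.edgeSet × Fin (n - 1)))))
    {u : V} (hu : .inl u ∈ s) :
    ∀ p ∈ s.toRight, u ∈ (p.1 : Sym2 V) ∧ edgePos n u p.1 p.2 ≤ m :=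
  fun _ hp => mem_and_edgePos_le_of_edist_le hmn (hs.edist_le_of_power hu (mem_toRight.mp hp))

theorem exists_forall_mem_toRight_edgePos_le (hmn : m < n)
    (hs : ((G.subdivision n).power m).IsClique (s : Set (V ⊕ (G.edgeSet × Fin (n - 1)))))
    {p q : G.edgeSet × Fin (n - 1)} (hp : p ∈ s.toRight) (hq : q ∈ s.toRight)
    (hpq : p.1 ≠ q.1) : ∃ u, ∀ x ∈ s.toRight, u ∈ (x.1 : Sym2 V) ∧ edgePos n u x.1 x.2 ≤ m := by
  have hdist : ∀ {x y}, x ∈ s.toRight → y ∈ s.toRight →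
      (G.subdivision n).edist (.inr x) (.inr y) ≤ m :=
    fun hx hy => hs.edist_le_of_power (mem_toRight.mp hx) (mem_toRight.mp hy)
  obtain ⟨u, hup, huq, -⟩ := exists_shared_endpoint_of_edist_le hmn hpq (hdist hp hq)
  have hmem : ∀ x ∈ s.toRight, u ∈ (x.1 : Sym2 V) := by
    intro x hx
    by_contra hux
    -- otherwise `p.1`, `q.1`, `x.1` form a triangle `u c d`, and the three pair bounds, each
    -- `≤ m < n`, would add up to its full length `3 * n`
    have hpx : p.1 ≠ x.1 := fun h => hux (h ▸ hup)
    have hqx : q.1 ≠ x.1 := fun h => hux (h ▸ huq)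
    obtain ⟨c, hcp, hcx, hc⟩ := exists_shared_endpoint_of_edist_le hmn hpx (hdist hp hx)
    obtain ⟨d, hdq, hdx, hd⟩ := exists_shared_endpoint_of_edist_le hmn hqx (hdist hq hx)
    have hcu : u ≠ c := fun h => hux (h ▸ hcx)
    have hdu : u ≠ d := fun h => hux (h ▸ hdx)
    have hcd : c ≠ d := fun h => hcu (eq_of_mem_of_mem_of_ne hpq hup huq hcp (h ▸ hdq))
    have := edgePos_add_edgePos hcu hup hcp p.2
    have := edgePos_add_edgePos hdu huq hdq q.2
    have := edgePos_add_edgePos hcd hcx hdx x.2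
    have := edgePos_add_edgePos_le_of_edist_le hmn hpq hup huq (hdist hp hq)
    omega
  refine ⟨u, fun x hx => ⟨hmem x hx, ?_⟩⟩
  by_cases hxp : x.1 = p.1
  · have := edgePos_add_edgePos_le_of_edist_le hmn (hxp ▸ hpq) (hmem x hx) huq (hdist hx hq)
    have := one_le_edgePos u q.1 q.2
    omega
  · have := edgePos_add_edgePos_le_of_edist_le hmn hxp (hmem x hx) hup (hdist hx hp)
    have := one_le_edgePos u p.1 p.2
    omega

theorem card_toRight_le_of_forall_fst_eq (hmn : m < n)
    (hs : ((G.subdivision n).power m).IsClique (s : Set (V ⊕ (G.edgeSet × Fin (n - 1)))))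
    (h : ∀ p ∈ s.toRight, ∀ q ∈ s.toRight, p.1 = q.1) : #s.toRight ≤ m + 1 := by
  rw [← card_image_of_injOn (f := fun p => (p.2 : ℕ))
    fun p hp q hq hpq => Prod.ext (h p hp q hq) (Fin.ext hpq)]
  refine card_le_add_one_of_forall_le_add fun _ ha _ hb => ?_
  obtain ⟨⟨e, i⟩, hp, rfl⟩ := mem_image.mp ha
  obtain ⟨⟨f, j⟩, hq, rfl⟩ := mem_image.mp hb
  obtain rfl : f = e := h _ hq _ hp
  exact le_add_of_edist_le hmn (hs.edist_le_of_power (mem_toRight.mp hq) (mem_toRight.mp hp))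

theorem card_le_of_isClique [Fintype V] [DecidableRel G.Adj] (hG : 2 ≤ G.maxDegree)
    (hmn : 2 * r + 1 < n) (hs : ((G.subdivision n).power (2 * r + 1)).IsClique
      (s : Set (V ⊕ (G.edgeSet × Fin (n - 1))))) :
    #s ≤ G.maxDegree * r + 2 := by
  have hstar : ∀ u, (∀ p ∈ s.toRight, u ∈ (p.1 : Sym2 V) ∧ edgePos n u p.1 p.2 ≤ 2 * r + 1) →
      #s.toRight ≤ G.maxDegree * r + 1 := fun u hu =>
    card_le_of_forall_edgePos_le hG hu fun p hp q hq hpq =>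
      edgePos_add_edgePos_le_of_edist_le hmn hpq (hu p hp).1 (hu q hq).1
        (hs.edist_le_of_power (mem_toRight.mp hp) (mem_toRight.mp hq))
  rw [← card_toLeft_add_card_toRight]
  by_cases hinl : ∃ u, .inl u ∈ s
  · obtain ⟨u, hu⟩ := hinl
    have := card_toLeft_le_one (by omega) hmn hs
    have := hstar u (forall_mem_toRight_edgePos_le_of_inl_mem hmn hs hu)
    omega
  rw [eq_empty_of_forall_notMem fun u hu => hinl ⟨u, mem_toLeft.mp hu⟩, card_empty, zero_add]
  by_cases hedge : ∀ p ∈ s.toRight, ∀ q ∈ s.toRight, p.1 = q.1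
  · calc #s.toRight ≤ 2 * r + 1 + 1 := card_toRight_le_of_forall_fst_eq hmn hs hedge
      _ ≤ G.maxDegree * r + 2 := by nlinarith
  · push Not at hedge
    obtain ⟨p, hp, q, hq, hpq⟩ := hedge
    obtain ⟨u, hu⟩ := exists_forall_mem_toRight_edgePos_le hmn hs hp hq hpq
    exact (hstar u hu).trans (by omega)

end Clique

theorem isClique_disjSum_singleton {u : V} {t : Finset (G.edgeSet × Fin (n - 1))}
    (ht : ∀ p ∈ t, u ∈ (p.1 : Sym2 V) ∧ edgePos n u p.1 p.2 ≤ m)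
    (hpair : ∀ p ∈ t, ∀ q ∈ t, p ≠ q → edgePos n u p.1 p.2 + edgePos n u q.1 q.2 ≤ m) :
    ((G.subdivision n).power m).IsClique
      ((({u} : Finset V).disjSum t : Finset _) : Set (V ⊕ (G.edgeSet × Fin (n - 1)))) := by
  have hu : ∀ p ∈ t, (G.subdivision n).edist (.inl u) (.inr p) ≤ edgePos n u p.1 p.2 :=
    fun p hp => edist_inl_inr_le_edgePos (ht p hp).1 p.2
  intro x hx y hy hxy
  refine power_adj_iff_edist_le.mpr ⟨hxy, ?_⟩
  rcases x with x | p <;> rcases y with y | q <;>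
    simp only [mem_coe, inl_mem_disjSum, inr_mem_disjSum, mem_singleton] at hx hy
  · exact absurd (hx.trans hy.symm ▸ rfl) hxy
  · exact hx ▸ (hu q hy).trans (by exact_mod_cast (ht q hy).2)
  · exact hy ▸ edist_comm.trans_le ((hu p hx).trans (by exact_mod_cast (ht p hx).2))
  · calc (G.subdivision n).edist (.inr p) (.inr q)
        ≤ (G.subdivision n).edist (.inl u) (.inr p) + (G.subdivision n).edist (.inl u) (.inr q) :=
          edist_comm (u := Sum.inr p) ▸ SimpleGraph.edist_triangle
      _ ≤ edgePos n u p.1 p.2 + edgePos n u q.1 q.2 := add_le_add (hu p hx) (hu q hy)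
      _ ≤ m := by exact_mod_cast hpair p hx q hy fun h => hxy (h ▸ rfl)

theorem card_filter_edgePos_le [Fintype V] [DecidableEq V] [DecidableRel G.Adj] (u : V)
    (hr : r < n) : #(univ.filter fun p : G.edgeSet × Fin (n - 1) =>
      u ∈ (p.1 : Sym2 V) ∧ edgePos n u p.1 p.2 ≤ r) = G.degree u * r := by
  have himage : (univ.filter fun p : G.edgeSet × Fin (n - 1) =>
      u ∈ (p.1 : Sym2 V) ∧ edgePos n u p.1 p.2 ≤ r).image (edgeCoord n u) =
        G.incidenceFinset u ×ˢ Icc 1 r := by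
    ext ⟨e, k⟩
    simp only [mem_image, mem_filter, mem_univ, true_and, mem_product, mem_incidenceFinset,
      mem_Icc, edgeCoord, Prod.mk.injEq]
    constructor
    · rintro ⟨p, ⟨hu, hle⟩, rfl, rfl⟩
      exact ⟨⟨p.1.2, hu⟩, one_le_edgePos u p.1 p.2, hle⟩
    · rintro ⟨⟨he, hu⟩, hk, hkr⟩
      obtain ⟨i, hi⟩ := exists_edgePos_eq u ⟨e, he⟩ hk (by omega : k ≤ n - 1)
      exact ⟨(⟨e, he⟩, i), ⟨hu, hi ▸ hkr⟩, rfl, hi⟩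
  rw [← card_image_of_injective _ (edgeCoord_injective u), himage, card_product,
    card_incidenceFinset_eq_degree, Nat.card_Icc, Nat.add_sub_cancel]

theorem exists_isClique_card_eq [Fintype V] [DecidableRel G.Adj] (hG : 0 < G.maxDegree)
    (hmn : 2 * r + 1 < n) : ∃ s : Finset (V ⊕ (G.edgeSet × Fin (n - 1))),
      ((G.subdivision n).power (2 * r + 1)).IsClique (s : Set _) ∧ #s = G.maxDegree * r + 2 := by
  classical
  have : Nonempty V := by
    by_contra hV
    have := G.maxDegree_le_of_forall_degree_le 0 fun v => absurd ⟨v⟩ hV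
    omega
  obtain ⟨u, hu⟩ := G.exists_maximal_degree_vertex
  obtain ⟨w, huw⟩ := (G.degree_pos_iff_exists_adj u).mp (hu ▸ hG)
  set e₀ : G.edgeSet := ⟨s(u, w), G.mem_edgeSet.mpr huw⟩
  obtain ⟨i₀, hi₀⟩ := exists_edgePos_eq (n := n) u e₀ (k := r + 1) (by omega) (by omega)
  set t₀ := univ.filter fun p : G.edgeSet × Fin (n - 1) =>
    u ∈ (p.1 : Sym2 V) ∧ edgePos n u p.1 p.2 ≤ r
  have ht : ∀ p ∈ insert (e₀, i₀) t₀, u ∈ (p.1 : Sym2 V) ∧ (p ≠ (e₀, i₀) → edgePos n u p.1 p.2 ≤ r)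
      ∧ edgePos n u p.1 p.2 ≤ r + 1 := by
    intro p hp
    rcases mem_insert.mp hp with rfl | hp
    · exact ⟨Sym2.mem_mk_left u w, fun h => (h rfl).elim, hi₀.le⟩
    · obtain ⟨hup, hle⟩ := (mem_filter.mp hp).2
      exact ⟨hup, fun _ => hle, hle.trans (Nat.le_succ r)⟩
  refine ⟨({u} : Finset V).disjSum (insert (e₀, i₀) t₀), isClique_disjSum_singleton ?_ ?_, ?_⟩
  · exact fun p hp => ⟨(ht p hp).1, (ht p hp).2.2.trans (by omega)⟩
  · intro p hp q hq hpq
    by_cases hp₀ : p = (e₀, i₀)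
    · have := (ht p hp).2.2
      have := (ht q hq).2.1 (hp₀ ▸ hpq.symm)
      omega
    · have := (ht p hp).2.1 hp₀
      have := (ht q hq).2.2
      omega
  · have hnotMem : (e₀, i₀) ∉ t₀ := fun h => by
      simp only [t₀, mem_filter] at h
      omega
    rw [card_disjSum, card_singleton, card_insert_of_notMem hnotMem,
      card_filter_edgePos_le u (by omega), ← hu]
    ring

end SimpleGraph

theorem cliqueNum_fractional_power_odd_general {V : Type*} [Fintype V]
    (G : SimpleGraph V) [DecidableRel G.Adj] (hG : 2 ≤ G.maxDegree)
    (m n : ℕ) (hmn : m < n) (hmo : Odd m) :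
    ((G.subdivision n).power m).cliqueNum = (m - 1) / 2 * G.maxDegree + 2 := by
  obtain ⟨r, rfl⟩ := hmo
  rw [show (2 * r + 1 - 1) / 2 = r by omega, mul_comm r]
  apply le_antisymm
  · obtain ⟨s, hs⟩ := ((G.subdivision n).power (2 * r + 1)).exists_isNClique_cliqueNum
    exact hs.card_eq ▸ card_le_of_isClique hG hmn hs.isClique
  · obtain ⟨s, hs, hcard⟩ := exists_isClique_card_eq (G := G) (by omega) hmn
    exact hcard ▸ hs.card_le_cliqueNum

theorem cliqueNum_fractional_power_odd {V : Type*} [Fintype V]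
    (G : SimpleGraph V) [DecidableRel G.Adj] (hG : 2 ≤ G.maxDegree)
    (m n : ℕ) (hm : 0 < m) (hmn : m < n) (hmo : Odd m) :
    ((G.subdivision n).power m).cliqueNum = (m - 1) / 2 * G.maxDegree + 2 :=
  cliqueNum_fractional_power_odd_general G hG m n hmn hmo
end

section
/- Let G be a graph and m < n positive integers. If the chromatic number of G^{m/n} equals its clique number, then the chromatic number of G^{m/(n+m+1)} equals its clique number. -/
open SimpleGraph

/-!
Write `A = G^{m/n}` and `B = G^{m/(n+m+1)}`. Wrapping each path of length `n + m + 1` onto a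
path of length `n` (on reaching the far end, jump back by `m` and run over the last `m` steps
again) is a homomorphism `B → A`, so `χ(B) ≤ χ(A) = ω(A)`. Conversely, as `m < n`, two vertices
at distance at most `m` lie on a common subdivided edge or are both close to a common original
vertex; hence a clique of `A` lies in the star of a single vertex `t`, and lengthening every
subdivided edge at its end away from `t` carries it to a clique of `B` of the same size. So
`ω(A) ≤ ω(B) ≤ χ(B) ≤ ω(A)`.
-/

namespace SimpleGraph

theorem chromaticNumber_eq_cliqueNum_of_hom {V W : Type*} {G : SimpleGraph V}
    {H : SimpleGraph W} (f : H →g G) (hG : G.chromaticNumber = G.cliqueNum) {s : Finset W}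
    (hs : H.IsNClique G.cliqueNum s) : H.chromaticNumber = H.cliqueNum := by
  have hχ : H.chromaticNumber = G.cliqueNum :=
    le_antisymm ((chromaticNumber_mono_of_hom f).trans hG.le)
      (hs.card_eq ▸ hs.isClique.card_le_chromaticNumber)
  have hbdd : BddAbove {k | ∃ t, H.IsNClique k t} := by
    refine ⟨G.cliqueNum, ?_⟩
    rintro k ⟨t, ht⟩
    exact_mod_cast ht.card_eq ▸ hχ ▸ ht.isClique.card_le_chromaticNumber
  have hle : (G.cliqueNum : ℕ∞) ≤ H.cliqueNum := by exact_mod_cast le_csSup hbdd ⟨s, hs⟩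
  exact hχ.trans (le_antisymm hle (hχ ▸ H.cliqueNum_le_chromaticNumber))

namespace Subdivision

open Sum

variable {V : Type*} {G : SimpleGraph V} {N m n : ℕ}

abbrev Vert (G : SimpleGraph V) (N : ℕ) := V ⊕ (G.edgeSet × Fin (N - 1))

/-- The internal vertex `inr (e, i)` of `G.subdivision N` lies at distance `i + 1` from
`fst e` and `N - 1 - i` from `snd e`. -/
noncomputable def fst (e : G.edgeSet) : V := (Quot.out e.1).1

noncomputable def snd (e : G.edgeSet) : V := (Quot.out e.1).2

lemma mk_fst_snd (e : G.edgeSet) : s(fst e, snd e) = e.1 := Quot.out_eq e.1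

lemma fst_ne_snd (e : G.edgeSet) : fst e ≠ snd e := by
  have he := e.2
  rw [← mk_fst_snd e, mem_edgeSet] at he
  exact he.ne

lemma edge_eq_of_ends {e f : G.edgeSet} {t t' : V} (htt' : t ≠ t')
    (hte : t = fst e ∨ t = snd e) (hte' : t' = fst e ∨ t' = snd e)
    (htf : t = fst f ∨ t = snd f) (htf' : t' = fst f ∨ t' = snd f) : e = f := by
  simp only [← Sym2.mem_iff, mk_fst_snd] at hte hte' htf htf'
  exact Subtype.ext (Sym2.eq_of_ne_mem htt' hte hte' htf htf')

lemma adj_inl_inl {u v : V} :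
    (G.subdivision N).Adj (inl u) (inl v) ↔ N = 1 ∧ G.Adj u v := Iff.rfl

lemma adj_inl_inr {u : V} {e : G.edgeSet} {i : Fin (N - 1)} :
    (G.subdivision N).Adj (inl u) (inr (e, i)) ↔
      (u = fst e ∧ (i : ℕ) = 0) ∨ (u = snd e ∧ (i : ℕ) = N - 2) := Iff.rfl

lemma adj_inr_inr {e f : G.edgeSet} {i j : Fin (N - 1)} :
    (G.subdivision N).Adj (inr (e, i)) (inr (f, j)) ↔
      e = f ∧ ((i : ℕ) + 1 = j ∨ (j : ℕ) + 1 = i) := Iff.rfl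

variable (N) in
/-- `Attached N x t k`: the vertex `x` lies on an edge at the terminal `t` (or is `t`), at
distance `k` from `t` along that edge. -/
def Attached (x : Vert G N) (t : V) (k : ℕ) : Prop :=
  match x with
  | inl s => s = t ∧ k = 0
  | inr (e, i) => (t = fst e ∧ k = i + 1) ∨ (t = snd e ∧ k = N - 1 - i)

variable (N) in
/-- The two ways in which vertices of `G.subdivision N` can be within distance `L < N`:
along one edge, or through a common terminal. -/
def Near (L : ℕ) (x y : Vert G N) : Prop :=
  x = y ∨
  (∃ (e : G.edgeSet) (i j : Fin (N - 1)), x = inr (e, i) ∧ y = inr (e, j) ∧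
      (i : ℕ) ≤ j + L ∧ (j : ℕ) ≤ i + L) ∨
  (∃ t k l, Attached N x t k ∧ Attached N y t l ∧ k + l ≤ L)

def InStar (t : V) (x : Vert G N) : Prop :=
  x = inl t ∨ ∃ (e : G.edgeSet) (i : Fin (N - 1)), x = inr (e, i) ∧ (t = fst e ∨ t = snd e)

lemma Attached.eq_fst_or_eq_snd {e : G.edgeSet} {i : Fin (N - 1)} {t : V} {k : ℕ}
    (h : Attached N (inr (e, i)) t k) : t = fst e ∨ t = snd e :=
  h.imp And.left And.left

lemma Attached.inStar {x : Vert G N} {t : V} {k : ℕ} (h : Attached N x t k) : InStar t x := by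
  rcases x with s | ⟨e, i⟩
  · exact Or.inl (congrArg inl h.1)
  · exact Or.inr ⟨e, i, rfl, Attached.eq_fst_or_eq_snd h⟩

lemma Attached.add_eq {x : Vert G N} {t t' : V} {k k' : ℕ} (h : Attached N x t k)
    (h' : Attached N x t' k') (htt' : t ≠ t') : k + k' = N := by
  rcases x with s | ⟨e, i⟩
  · exact absurd (h.1.symm.trans h'.1) htt'
  · have := i.isLt
    rcases h with ⟨rfl, rfl⟩ | ⟨rfl, rfl⟩ <;> rcases h' with ⟨h', rfl⟩ | ⟨h', rfl⟩
    all_goals first | exact absurd h'.symm htt' | omega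

lemma exists_walk_inr_inr (e : G.edgeSet) (d : ℕ) :
    ∀ {i j : Fin (N - 1)}, (j : ℕ) = i + d →
      ∃ W : (G.subdivision N).Walk (inr (e, i)) (inr (e, j)), W.length = d := by
  induction d with
  | zero => intro i j h; obtain rfl : i = j := Fin.ext h.symm; exact ⟨.nil, rfl⟩
  | succ d ih =>
    intro i j h
    have hd : (i : ℕ) + d < N - 1 := by omega
    obtain ⟨W, hW⟩ := ih (j := ⟨i + d, hd⟩) rfl
    exact ⟨W.concat (adj_inr_inr.mpr ⟨rfl, Or.inl (by simp only [h]; omega)⟩), by simp [hW]⟩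

lemma Attached.exists_walk {x : Vert G N} {t : V} {k : ℕ} (h : Attached N x t k) :
    ∃ W : (G.subdivision N).Walk (inl t) x, W.length = k := by
  rcases x with s | ⟨e, i⟩
  · obtain ⟨rfl, rfl⟩ := h
    exact ⟨.nil, rfl⟩
  · have := i.isLt
    rcases h with ⟨rfl, rfl⟩ | ⟨rfl, rfl⟩
    · obtain ⟨W, hW⟩ := exists_walk_inr_inr (j := i) e i (i := ⟨0, by omega⟩) (by simp)
      exact ⟨.cons (adj_inl_inr.mpr (Or.inl ⟨rfl, rfl⟩)) W, by simp [hW]⟩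
    · obtain ⟨W, hW⟩ := exists_walk_inr_inr (i := i) (j := ⟨N - 2, by omega⟩) e (N - 2 - i)
        (by dsimp only; omega)
      refine ⟨(W.concat (adj_inl_inr.mpr (Or.inr ⟨rfl, rfl⟩)).symm).reverse, ?_⟩
      simp only [Walk.length_reverse, Walk.length_concat, hW]; omega

lemma power_adj_of_walk {m : ℕ} {x y : Vert G N} (hxy : x ≠ y)
    (W : (G.subdivision N).Walk x y) (hW : W.length ≤ m) : ((G.subdivision N).power m).Adj x y :=
  ⟨hxy, ⟨W⟩, (dist_le W).trans hW⟩

lemma power_adj_of_attached {m : ℕ} {x y : Vert G N} {t : V} {k l : ℕ} (hxy : x ≠ y)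
    (hx : Attached N x t k) (hy : Attached N y t l) (hkl : k + l ≤ m) :
    ((G.subdivision N).power m).Adj x y := by
  obtain ⟨Wx, hWx⟩ := hx.exists_walk
  obtain ⟨Wy, hWy⟩ := hy.exists_walk
  exact power_adj_of_walk hxy (Wx.reverse.append Wy) (by simp [hWx, hWy, hkl])

lemma power_adj_inr_inr {m : ℕ} (e : G.edgeSet) {i j : ℕ} (hi : i < N - 1) (hj : j < N - 1)
    (hij : i ≠ j) (h₁ : i ≤ j + m) (h₂ : j ≤ i + m) :
    ((G.subdivision N).power m).Adj (inr (e, ⟨i, hi⟩)) (inr (e, ⟨j, hj⟩)) := by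
  have hne : (inr (e, ⟨i, hi⟩) : Vert G N) ≠ inr (e, ⟨j, hj⟩) := by simpa using hij
  rcases le_total i j with hle | hle
  · obtain ⟨W, hW⟩ := exists_walk_inr_inr (i := ⟨i, hi⟩) (j := ⟨j, hj⟩) e (j - i)
      (by dsimp only; omega)
    exact power_adj_of_walk hne W (by omega)
  · obtain ⟨W, hW⟩ := exists_walk_inr_inr (i := ⟨j, hj⟩) (j := ⟨i, hi⟩) e (i - j)
      (by dsimp only; omega)
    exact (power_adj_of_walk hne.symm W (by omega)).symm

lemma Near.power_adj {m : ℕ} {x y : Vert G N} (hxy : x ≠ y) (h : Near N m x y) :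
    ((G.subdivision N).power m).Adj x y := by
  rcases h with rfl | ⟨e, i, j, rfl, rfl, h₁, h₂⟩ | ⟨t, k, l, hx, hy, hkl⟩
  · exact absurd rfl hxy
  · exact power_adj_inr_inr e i.isLt j.isLt (fun h => hxy (by simp [Fin.ext h])) h₁ h₂
  · exact power_adj_of_attached hxy hx hy hkl

lemma Near.mono {L L' : ℕ} (hLL' : L ≤ L') {x y : Vert G N} (h : Near N L x y) :
    Near N L' x y := by
  rcases h with rfl | ⟨e, i, j, rfl, rfl, h₁, h₂⟩ | ⟨t, k, l, hx, hy, hkl⟩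
  · exact Or.inl rfl
  · exact Or.inr (Or.inl ⟨e, i, j, rfl, rfl, by omega, by omega⟩)
  · exact Or.inr (Or.inr ⟨t, k, l, hx, hy, by omega⟩)

lemma attached_of_adj_inl {u : V} {e : G.edgeSet} {i : Fin (N - 1)}
    (h : (G.subdivision N).Adj (inl u) (inr (e, i))) : Attached N (inr (e, i)) u 1 := by
  have := i.isLt
  rcases adj_inl_inr.mp h with ⟨rfl, hi⟩ | ⟨rfl, hi⟩
  · exact Or.inl ⟨rfl, by omega⟩
  · exact Or.inr ⟨rfl, by omega⟩

lemma near_one_of_adj (hN : 1 < N) {x y : Vert G N} (h : (G.subdivision N).Adj x y) :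
    Near N 1 x y := by
  rcases x with u | ⟨e, i⟩ <;> rcases y with v | ⟨f, j⟩
  · exact absurd (adj_inl_inl.mp h).1 (by omega)
  · exact Or.inr (Or.inr ⟨u, 0, 1, ⟨rfl, rfl⟩, attached_of_adj_inl h, le_rfl⟩)
  · exact Or.inr (Or.inr ⟨v, 1, 0, attached_of_adj_inl h.symm, ⟨rfl, rfl⟩, le_rfl⟩)
  · obtain ⟨rfl, hij⟩ := adj_inr_inr.mp h
    exact Or.inr (Or.inl ⟨e, i, j, rfl, rfl, by omega, by omega⟩)

lemma Attached.of_adj {x z : Vert G N} {t : V} {k : ℕ} (hxz : (G.subdivision N).Adj x z)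
    (hz : Attached N z t k) (hk : k + 1 < N) : ∃ k' ≤ k + 1, Attached N x t k' := by
  rcases x with u | ⟨f, i⟩ <;> rcases z with w | ⟨f', j⟩
  · exact absurd (adj_inl_inl.mp hxz).1 (by omega)
  · have := j.isLt
    refine ⟨0, by omega, ?_, rfl⟩
    rcases adj_inl_inr.mp hxz with ⟨rfl, hj⟩ | ⟨rfl, hj⟩ <;>
      rcases hz with ⟨rfl, rfl⟩ | ⟨rfl, rfl⟩ <;> first | rfl | omega
  · obtain ⟨rfl, rfl⟩ := hz
    exact ⟨1, by omega, attached_of_adj_inl hxz.symm⟩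
  · obtain ⟨rfl, hij⟩ := adj_inr_inr.mp hxz
    have := i.isLt
    rcases hz with ⟨rfl, rfl⟩ | ⟨rfl, rfl⟩
    · exact ⟨i + 1, by omega, Or.inl ⟨rfl, rfl⟩⟩
    · exact ⟨N - 1 - i, by omega, Or.inr ⟨rfl, rfl⟩⟩

lemma Attached.of_inr_inr {e : G.edgeSet} {i j : Fin (N - 1)} {t : V} {k d : ℕ}
    (h : Attached N (inr (e, i)) t k) (h₁ : (i : ℕ) ≤ j + d) (h₂ : (j : ℕ) ≤ i + d) :
    ∃ k' ≤ k + d, Attached N (inr (e, j)) t k' := by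
  have := j.isLt
  rcases h with ⟨rfl, rfl⟩ | ⟨rfl, rfl⟩
  · exact ⟨j + 1, by omega, Or.inl ⟨rfl, rfl⟩⟩
  · exact ⟨N - 1 - j, by omega, Or.inr ⟨rfl, rfl⟩⟩

lemma Near.of_adj_of_near {L : ℕ} (hL : L + 1 < N) {x y z : Vert G N}
    (hxz : (G.subdivision N).Adj x z) (hzy : Near N L z y) : Near N (L + 1) x y := by
  rcases hzy with rfl | ⟨e, j, j', rfl, rfl, h₁, h₂⟩ | ⟨t, k, l, hz, hy, hkl⟩
  · exact (near_one_of_adj (by omega) hxz).mono (by omega)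
  · rcases x with u | ⟨f, i⟩
    · obtain ⟨l, hl, hy⟩ := (attached_of_adj_inl hxz).of_inr_inr h₁ h₂
      exact Or.inr (Or.inr ⟨u, 0, l, ⟨rfl, rfl⟩, hy, by omega⟩)
    · obtain ⟨rfl, hij⟩ := adj_inr_inr.mp hxz
      exact Or.inr (Or.inl ⟨f, i, j', rfl, rfl, by omega, by omega⟩)
  · obtain ⟨k', hk', hx⟩ := hz.of_adj hxz (by omega)
    exact Or.inr (Or.inr ⟨t, k', l, hx, hy, by omega⟩)

lemma near_of_walk {x y : Vert G N} (W : (G.subdivision N).Walk x y) (hW : W.length < N) :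
    Near N W.length x y := by
  induction W with
  | nil => exact Or.inl rfl
  | cons hxz W ih =>
    rw [Walk.length_cons] at hW ⊢
    exact Near.of_adj_of_near hW hxz (ih (by omega))

lemma Near.of_power_adj {m : ℕ} (hmN : m < N) {x y : Vert G N}
    (h : ((G.subdivision N).power m).Adj x y) : Near N m x y := by
  obtain ⟨-, hxy, hdist⟩ := h
  obtain ⟨W, hW⟩ := hxy.exists_walk_length_eq_dist
  exact (near_of_walk W (by omega)).mono (by omega)

lemma Near.le_add_of_inr_inr {L : ℕ} (hL : L < N) {e : G.edgeSet} {i j : Fin (N - 1)}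
    (h : Near N L (inr (e, i)) (inr (e, j))) : (i : ℕ) ≤ j + L ∧ (j : ℕ) ≤ i + L := by
  have := i.isLt
  rcases h with h | ⟨e', i', j', hx, hy, h₁, h₂⟩ | ⟨t, k, l, hx, hy, hkl⟩
  · simp only [inr.injEq, Prod.mk.injEq, true_and] at h
    omega
  · simp only [inr.injEq, Prod.mk.injEq] at hx hy
    obtain ⟨-, rfl⟩ := hx
    obtain ⟨-, rfl⟩ := hy
    omega
  · rcases hx with ⟨rfl, rfl⟩ | ⟨rfl, rfl⟩ <;> rcases hy with ⟨h, rfl⟩ | ⟨h, rfl⟩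
    all_goals first | omega | exact absurd h (fst_ne_snd e) | exact absurd h.symm (fst_ne_snd e)

lemma Near.exists_attached_of_ne {L : ℕ} {e f : G.edgeSet} {i j : Fin (N - 1)}
    (h : Near N L (inr (e, i)) (inr (f, j))) (hef : e ≠ f) :
    ∃ t k l, Attached N (inr (e, i)) t k ∧ Attached N (inr (f, j)) t l ∧ k + l ≤ L := by
  rcases h with h | ⟨e', i', j', hx, hy, -⟩ | h
  · simp only [inr.injEq, Prod.mk.injEq] at h
    exact absurd h.1 hef
  · simp only [inr.injEq, Prod.mk.injEq] at hx hy
    exact absurd (hx.1.trans hy.1.symm) hef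
  · exact h

/-- Wraps each path of length `n + m + 1` onto a path of length `n`: after its first `n` steps,
from `fst e` to `snd e`, it jumps back to distance `m` from `snd e` (an edge of the `m`-th
power) and runs over the last `m` steps again. -/
noncomputable def fold (hmn : m < n) : Vert G (n + m + 1) → Vert G n
  | inl u => inl u
  | inr (e, i) =>
    if h : (i : ℕ) < n - 1 then inr (e, ⟨i, h⟩)
    else if h' : (i : ℕ) = n - 1 then inl (snd e)
    else inr (e, ⟨i - (m + 1), by have := i.isLt; omega⟩)

open Classical in
/-- Lengthens each path of `G.subdivision n` by `m + 1` at the end away from `t`. -/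
noncomputable def unfold (m : ℕ) (t : V) : Vert G n → Vert G (n + m + 1)
  | inl u => inl u
  | inr (e, i) =>
    if t = fst e then inr (e, ⟨i, by have := i.isLt; omega⟩)
    else inr (e, ⟨i + m + 1, by have := i.isLt; omega⟩)

section fold

variable (hmn : m < n) {e : G.edgeSet} {i : Fin (n + m + 1 - 1)}

lemma fold_inr_of_lt (h : (i : ℕ) < n - 1) : fold hmn (inr (e, i)) = inr (e, ⟨i, h⟩) :=
  dif_pos h

lemma fold_inr_of_eq (h : (i : ℕ) = n - 1) : fold hmn (inr (e, i)) = inl (snd e) := by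
  simp [fold, h]

lemma fold_inr_of_gt (h : n - 1 < i) :
    fold hmn (inr (e, i)) = inr (e, ⟨i - (m + 1), by have := i.isLt; omega⟩) := by
  simp [fold, show ¬ (i : ℕ) < n - 1 by omega, show (i : ℕ) ≠ n - 1 by omega]

end fold

lemma Attached.fold (hmn : m < n) {x : Vert G (n + m + 1)} {t : V} {k : ℕ}
    (h : Attached (n + m + 1) x t k) (hk : k ≤ m) : Attached n (fold hmn x) t k := by
  rcases x with s | ⟨e, i⟩
  · exact h
  · have := i.isLt
    rcases h with ⟨rfl, rfl⟩ | ⟨rfl, rfl⟩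
    · rw [fold_inr_of_lt hmn (by omega)]
      exact Or.inl ⟨rfl, rfl⟩
    · rw [fold_inr_of_gt hmn (by omega)]
      exact Or.inr ⟨rfl, by dsimp only; omega⟩

lemma unfold_inr_of_eq {t : V} {e : G.edgeSet} {i : Fin (n - 1)} (h : t = fst e) :
    unfold m t (inr (e, i)) = inr (e, ⟨i, by have := i.isLt; omega⟩) := by
  simp [unfold, h]

lemma unfold_inr_of_ne {t : V} {e : G.edgeSet} {i : Fin (n - 1)} (h : t ≠ fst e) :
    unfold m t (inr (e, i)) = inr (e, ⟨i + m + 1, by have := i.isLt; omega⟩) := by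
  simp [unfold, h]

lemma unfold_fold (hmn : m < n) {x : Vert G (n + m + 1)} {t : V} {k : ℕ}
    (h : Attached (n + m + 1) x t k) (hk : k ≤ m) : unfold m t (fold hmn x) = x := by
  rcases x with s | ⟨e, i⟩
  · rfl
  · have := i.isLt
    rcases h with ⟨rfl, rfl⟩ | ⟨rfl, rfl⟩
    · rw [fold_inr_of_lt hmn (by omega), unfold_inr_of_eq rfl]
    · rw [fold_inr_of_gt hmn (by omega), unfold_inr_of_ne (fst_ne_snd e).symm]
      simp only [inr.injEq, Prod.mk.injEq, true_and]
      ext; dsimp only; omega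

lemma unfold_injective (t : V) : Function.Injective (unfold (G := G) (n := n) m t) := by
  rintro (u | ⟨e, i⟩) (v | ⟨f, j⟩) h <;> simp only [unfold] at h
  · exact congrArg inl (inl.inj h)
  all_goals split_ifs at h <;> simp only [inr.injEq, Prod.mk.injEq, Fin.mk.injEq] at h
  all_goals obtain ⟨rfl, h⟩ := h
  all_goals first
    | (simp_all; done)
    | (simp only [inr.injEq, Prod.mk.injEq, true_and]; exact Fin.ext (by omega))

lemma fold_adj_inr_inr (hmn : m < n) (e : G.edgeSet) {i j : Fin (n + m + 1 - 1)}
    (hij : (i : ℕ) < j) (hji : (j : ℕ) ≤ i + m) :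
    ((G.subdivision n).power m).Adj (fold hmn (inr (e, i))) (fold hmn (inr (e, j))) := by
  have := j.isLt
  rcases lt_trichotomy (j : ℕ) (n - 1) with hj | hj | hj
  · rw [fold_inr_of_lt hmn (by omega), fold_inr_of_lt hmn hj]
    exact power_adj_inr_inr e _ _ (by omega) (by omega) (by omega)
  · rw [fold_inr_of_lt hmn (by omega), fold_inr_of_eq hmn hj]
    exact power_adj_of_attached (by simp) (Or.inr ⟨rfl, rfl⟩) ⟨rfl, rfl⟩
      (by dsimp only; omega)
  rw [fold_inr_of_gt hmn hj]
  rcases lt_trichotomy (i : ℕ) (n - 1) with hi | hi | hi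
  · rw [fold_inr_of_lt hmn hi]
    exact power_adj_inr_inr e _ _ (by omega) (by omega) (by omega)
  · rw [fold_inr_of_eq hmn hi]
    exact power_adj_of_attached (by simp) ⟨rfl, rfl⟩ (Or.inr ⟨rfl, rfl⟩)
      (by dsimp only; omega)
  · rw [fold_inr_of_gt hmn hi]
    exact power_adj_inr_inr e _ _ (by omega) (by omega) (by omega)

lemma fold_adj (hmn : m < n) {x y : Vert G (n + m + 1)}
    (h : ((G.subdivision (n + m + 1)).power m).Adj x y) :
    ((G.subdivision n).power m).Adj (fold hmn x) (fold hmn y) := by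
  rcases Near.of_power_adj (by omega) h with rfl | ⟨e, i, j, rfl, rfl, h₁, h₂⟩ |
    ⟨t, k, l, hx, hy, hkl⟩
  · exact absurd rfl h.ne
  · rcases lt_trichotomy (i : ℕ) j with hij | hij | hij
    · exact fold_adj_inr_inr hmn e hij h₂
    · exact absurd (by simp [Fin.ext hij]) h.ne
    · exact (fold_adj_inr_inr hmn e hij h₁).symm
  · have hfold : fold hmn x ≠ fold hmn y := fun hxy => h.ne <| by
      rw [← unfold_fold hmn hx (by omega), hxy, unfold_fold hmn hy (by omega)]
    exact power_adj_of_attached hfold (hx.fold hmn (by omega)) (hy.fold hmn (by omega)) hkl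

noncomputable def foldHom (hmn : m < n) :
    (G.subdivision (n + m + 1)).power m →g (G.subdivision n).power m :=
  ⟨fold hmn, fold_adj hmn⟩

lemma Attached.unfold {x : Vert G n} {t : V} {k : ℕ} (h : Attached n x t k) :
    Attached (n + m + 1) (unfold m t x) t k := by
  rcases x with s | ⟨e, i⟩
  · exact h
  · have := i.isLt
    rcases h with ⟨rfl, rfl⟩ | ⟨rfl, rfl⟩
    · rw [unfold_inr_of_eq rfl]
      exact Or.inl ⟨rfl, rfl⟩
    · rw [unfold_inr_of_ne (fst_ne_snd e).symm]
      exact Or.inr ⟨rfl, by dsimp only; omega⟩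

lemma near_unfold_inr_inr (t : V) (e : G.edgeSet) {i j : Fin (n - 1)} (h₁ : (i : ℕ) ≤ j + m)
    (h₂ : (j : ℕ) ≤ i + m) :
    Near (n + m + 1) m (unfold m t (inr (e, i))) (unfold m t (inr (e, j))) := by
  by_cases ht : t = fst e
  · rw [unfold_inr_of_eq ht, unfold_inr_of_eq ht]
    exact Or.inr (Or.inl ⟨e, _, _, rfl, rfl, by omega, by omega⟩)
  · rw [unfold_inr_of_ne ht, unfold_inr_of_ne ht]
    exact Or.inr (Or.inl ⟨e, _, _, rfl, rfl, by dsimp only; omega, by dsimp only; omega⟩)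

lemma InStar.exists_inr_of_attached {t t' : V} {x : Vert G n} {k : ℕ} (hx : InStar t x)
    (hx' : Attached n x t' k) (htt' : t' ≠ t) : ∃ (e : G.edgeSet) (i : Fin (n - 1)),
      x = inr (e, i) ∧ (t = fst e ∨ t = snd e) ∧ (t' = fst e ∨ t' = snd e) := by
  rcases hx with rfl | ⟨e, i, rfl, he⟩
  · exact absurd hx'.1.symm htt'
  · exact ⟨e, i, rfl, he, hx'.eq_fst_or_eq_snd⟩

lemma near_unfold (hmn : m < n) {t : V} {x y : Vert G n} (hx : InStar t x) (hy : InStar t y)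
    (h : Near n m x y) : Near (n + m + 1) m (unfold m t x) (unfold m t y) := by
  rcases h with rfl | ⟨e, i, j, rfl, rfl, h₁, h₂⟩ | ⟨t', k, l, hx', hy', hkl⟩
  · exact Or.inl rfl
  · exact near_unfold_inr_inr t e h₁ h₂
  by_cases htt' : t' = t
  · subst htt'
    exact Or.inr (Or.inr ⟨t', k, l, hx'.unfold, hy'.unfold, hkl⟩)
  obtain ⟨e, i, rfl, hte, hte'⟩ := hx.exists_inr_of_attached hx' htt'
  obtain ⟨f, j, rfl, htf, htf'⟩ := hy.exists_inr_of_attached hy' htt'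
  obtain rfl := edge_eq_of_ends (Ne.symm htt') hte hte' htf htf'
  obtain ⟨h₁, h₂⟩ :=
    Near.le_add_of_inr_inr hmn (Or.inr (Or.inr ⟨t', k, l, hx', hy', hkl⟩))
  exact near_unfold_inr_inr t e h₁ h₂

lemma unfold_adj (hmn : m < n) {t : V} {x y : Vert G n} (hx : InStar t x) (hy : InStar t y)
    (h : ((G.subdivision n).power m).Adj x y) :
    ((G.subdivision (n + m + 1)).power m).Adj (unfold m t x) (unfold m t y) :=
  (near_unfold hmn hx hy (Near.of_power_adj hmn h)).power_adj ((unfold_injective t).ne h.ne)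

lemma inStar_of_inl_mem (hmn : m < n) {s : Finset (Vert G n)}
    (hs : ((G.subdivision n).power m).IsClique s) {u : V} (hu : inl u ∈ s) :
    ∀ z ∈ s, InStar u z := by
  intro z hz
  by_cases hzu : z = inl u
  · exact Or.inl hzu
  rcases Near.of_power_adj hmn (hs hu hz (Ne.symm hzu)) with h | ⟨e, i, j, h, -⟩ |
    ⟨t, k, l, hut, hzt, -⟩
  · exact absurd h.symm hzu
  · cases h
  · obtain rfl : u = t := hut.1
    exact hzt.inStar

/-- Otherwise the three edges form a triangle of `G`, and its subdivision, a cycle of length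
`3 * n`, would be covered by three detours of total length at most `3 * m`. -/
lemma eq_fst_or_eq_snd_of_near (hmn : m < n) {e f g : G.edgeSet} {i j l : Fin (n - 1)} {t : V}
    {a b : ℕ} (hef : e ≠ f) (hx : Attached n (inr (e, i)) t a)
    (hw : Attached n (inr (f, j)) t b) (hab : a + b ≤ m)
    (hxz : Near n m (inr (e, i)) (inr (g, l))) (hwz : Near n m (inr (f, j)) (inr (g, l))) :
    t = fst g ∨ t = snd g := by
  by_cases heg : e = g
  · exact heg ▸ hx.eq_fst_or_eq_snd
  by_cases hfg : f = g
  · exact hfg ▸ hw.eq_fst_or_eq_snd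
  obtain ⟨t₁, a₁, c₁, hx₁, hz₁, h₁⟩ := hxz.exists_attached_of_ne heg
  obtain ⟨t₂, b₂, c₂, hw₂, hz₂, h₂⟩ := hwz.exists_attached_of_ne hfg
  by_cases ht₁ : t₁ = t
  · exact ht₁ ▸ hz₁.eq_fst_or_eq_snd
  by_cases ht₂ : t₂ = t
  · exact ht₂ ▸ hz₂.eq_fst_or_eq_snd
  have ht₁₂ : t₁ ≠ t₂ := by
    rintro rfl
    exact hef (edge_eq_of_ends ht₁ hx₁.eq_fst_or_eq_snd hx.eq_fst_or_eq_snd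
      hw₂.eq_fst_or_eq_snd hw.eq_fst_or_eq_snd)
  have := hx.add_eq hx₁ (Ne.symm ht₁)
  have := hw.add_eq hw₂ (Ne.symm ht₂)
  have := hz₁.add_eq hz₂ ht₁₂
  omega

lemma exists_inStar (hmn : m < n) {s : Finset (Vert G n)}
    (hs : ((G.subdivision n).power m).IsClique s) (hne : s.Nonempty) :
    ∃ t, ∀ x ∈ s, InStar t x := by
  have near {x y} (hx : x ∈ s) (hy : y ∈ s) : Near n m x y := by
    by_cases hxy : x = y
    · exact Or.inl hxy
    · exact Near.of_power_adj hmn (hs hx hy hxy)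
  by_cases hinl : ∃ u, inl u ∈ s
  · obtain ⟨u, hu⟩ := hinl
    exact ⟨u, inStar_of_inl_mem hmn hs hu⟩
  push Not at hinl
  have exists_inr {z} (hz : z ∈ s) : ∃ g l, z = inr (g, l) := by
    rcases z with u | ⟨g, l⟩
    · exact absurd hz (hinl u)
    · exact ⟨g, l, rfl⟩
  obtain ⟨x, hx⟩ := hne
  obtain ⟨e, i, rfl⟩ := exists_inr hx
  by_cases hall : ∀ z ∈ s, ∃ j, z = inr (e, j)
  · refine ⟨fst e, fun z hz => ?_⟩
    obtain ⟨j, rfl⟩ := hall z hz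
    exact Or.inr ⟨e, j, rfl, Or.inl rfl⟩
  push Not at hall
  obtain ⟨w, hw, hwe⟩ := hall
  obtain ⟨f, j, rfl⟩ := exists_inr hw
  have hef : e ≠ f := by
    rintro rfl
    exact hwe j rfl
  obtain ⟨t, a, b, hxt, hwt, hab⟩ :=
    (near hx hw).exists_attached_of_ne hef
  refine ⟨t, fun z hz => ?_⟩
  obtain ⟨g, l, rfl⟩ := exists_inr hz
  refine Or.inr ⟨g, l, rfl, ?_⟩
  exact eq_fst_or_eq_snd_of_near hmn hef hxt hwt hab (near hx hz) (near hw hz)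

lemma exists_isNClique_power_subdivision_add (hmn : m < n) {k : ℕ} {s : Finset (Vert G n)}
    (hs : ((G.subdivision n).power m).IsNClique k s) :
    ∃ s', ((G.subdivision (n + m + 1)).power m).IsNClique k s' := by
  classical
  rcases s.eq_empty_or_nonempty with rfl | hne
  · exact ⟨∅, by simpa using hs⟩
  obtain ⟨t, ht⟩ := exists_inStar hmn hs.isClique hne
  refine ⟨s.image (unfold m t), ?_, ?_⟩
  · rw [Finset.coe_image]
    rintro _ ⟨x, hx, rfl⟩ _ ⟨y, hy, rfl⟩ hxy
    exact unfold_adj hmn (ht x hx) (ht y hy) (hs.isClique hx hy (ne_of_apply_ne _ hxy))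
  · rw [Finset.card_image_of_injective _ (unfold_injective t), hs.card_eq]

end Subdivision

end SimpleGraph

theorem chromatic_eq_clique_step_general {V : Type*} (G : SimpleGraph V)
    (m n : ℕ) (hmn : m < n)
    (h : ((G.subdivision n).power m).chromaticNumber
        = (((G.subdivision n).power m).cliqueNum : ℕ∞)) :
    ((G.subdivision (n + m + 1)).power m).chromaticNumber
        = (((G.subdivision (n + m + 1)).power m).cliqueNum : ℕ∞) := by
  obtain ⟨s, hs⟩ := ((G.subdivision n).power m).exists_isNClique_cliqueNum
  obtain ⟨s', hs'⟩ := Subdivision.exists_isNClique_power_subdivision_add hmn hs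
  exact chromaticNumber_eq_cliqueNum_of_hom (Subdivision.foldHom hmn) h hs'

theorem chromatic_eq_clique_step {V : Type*} (G : SimpleGraph V)
    (m n : ℕ) (hm : 0 < m) (hmn : m < n)
    (h : ((G.subdivision n).power m).chromaticNumber
        = (((G.subdivision n).power m).cliqueNum : ℕ∞)) :
    ((G.subdivision (n + m + 1)).power m).chromaticNumber
        = (((G.subdivision (n + m + 1)).power m).cliqueNum : ℕ∞) :=
  chromatic_eq_clique_step_general G m n hmn h
end
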